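/- arXiv:1803.00882 — 10 statements merged into one kernel-verified Lean document; each statement's English description precedes it below -/
import Mathlib

section
/- Let G be a temporal graph with a single layer G₁ (i.e., a static graph interpreted as a temporal graph with τ = 1), with edges E₁ = {e₁,...,e_m} enumerated in some fixed order, and let G' be the temporal graph on the same vertex set where layer j contains exactly the single edge e_j (time-edge set {(e_j, j) : j ∈ [m]}). Then for any vertices v, w, for every (v,w)-path P of length ℓ ≤ m in G₁ there is a temporal (v,w)-path in the ℓ-fold concatenation (G')^ℓ that visits the vertices in the same order as P. -/
/-- A temporal graph: a set of time-edges over vertex set `V`, with time labels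
in `{1, ..., tau}`. -/
structure TemporalGraph (V : Type*) where
  E : Sym2 V → ℕ → Prop
  tau : ℕ
  valid : ∀ e t, E e t → 1 ≤ t ∧ t ≤ tau

namespace TemporalGraph

variable {V : Type*}

/-- `G − S`: delete the vertices of `S` (i.e. all time-edges incident to `S`). -/
def del (G : TemporalGraph V) (S : Set V) : TemporalGraph V where
  E e t := G.E e t ∧ ∀ v ∈ e, v ∉ S
  tau := G.tau
  valid e t h := G.valid e t h.1

/-- `vs` (the visited vertices, in order) together with the time labels `ts`
form a temporal `(s,z)`-path: consecutive vertices are joined by time-edges,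
the labels are non-decreasing, and the visited vertices are pairwise distinct. -/
def IsTempPath (G : TemporalGraph V) (s z : V) (vs : List V) (ts : List ℕ) : Prop :=
  vs.length = ts.length + 1 ∧ vs.Nodup ∧ vs.head? = some s ∧ vs.getLast? = some z ∧
  List.Chain' (· ≤ ·) ts ∧
  ∀ (i : ℕ) (hts : i < ts.length) (hvs : i + 1 < vs.length),
    G.E s(vs.get ⟨i, Nat.lt_of_succ_lt hvs⟩, vs.get ⟨i + 1, hvs⟩) (ts.get ⟨i, hts⟩)

/-- `w` is reachable from `s` by a temporal path. -/
def Reach (G : TemporalGraph V) (s w : V) : Prop :=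
  ∃ vs ts, G.IsTempPath s w vs ts

/-- `w` is reachable from `s` by a temporal path with arrival time at most `t`. -/
def ReachBy (G : TemporalGraph V) (s w : V) (t : ℕ) : Prop :=
  ∃ vs ts, G.IsTempPath s w vs ts ∧ ∀ t' ∈ ts, t' ≤ t

/-- `S` is a temporal `(s,z)`-separator: no temporal `(s,z)`-path in `G − S`. -/
def IsSep (G : TemporalGraph V) (s z : V) (S : Set V) : Prop :=
  ¬ ∃ vs ts, (G.del S).IsTempPath s z vs ts

/-- The underlying static graph of a temporal graph. -/
def underlying (G : TemporalGraph V) : SimpleGraph V where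
  Adj v w := v ≠ w ∧ ∃ t, G.E s(v, w) t
  symm := ⟨fun v w ⟨hne, t, ht⟩ => ⟨hne.symm, t, by rw [Sym2.eq_swap]; exact ht⟩⟩
  loopless := ⟨fun v h => h.1 rfl⟩

/-- Concatenation `G₁ ∘ G₂`: the time labels of `G₂` are shifted by `G₁.tau`. -/
def concat (G₁ G₂ : TemporalGraph V) : TemporalGraph V where
  E e t := G₁.E e t ∨ (G₁.tau < t ∧ G₂.E e (t - G₁.tau))
  tau := G₁.tau + G₂.tau
  valid := by
    rintro e t (h | ⟨h1, h2⟩)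
    · have := G₁.valid e t h; omega
    · have := G₂.valid e (t - G₁.tau) h2; omega

/-- The temporal graph with no time-edges and maximum label 0. -/
def emptyTG (V : Type*) : TemporalGraph V where
  E _ _ := False
  tau := 0
  valid := by intro e t h; exact h.elim

/-- `pow G n` is the `n`-fold concatenation `G ∘ G ∘ ⋯ ∘ G`. -/
def pow (G : TemporalGraph V) : ℕ → TemporalGraph V
  | 0 => emptyTG V
  | n + 1 => (pow G n).concat G

/-- `G_{[a:b]}`: restriction to time-edges with labels in `[a, b]`. -/
def restrict (G : TemporalGraph V) (a b : ℕ) : TemporalGraph V where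
  E e t := G.E e t ∧ a ≤ t ∧ t ≤ b
  tau := min b G.tau
  valid := by rintro e t ⟨h, ha, hb⟩; have := G.valid e t h; omega

/-- `G` (on the vertices of `W`) is an order-preserving temporal unit interval
graph with respect to the linear order on `V`: every layer satisfies the
sandwich property characterizing unit interval graphs compatible with the
order (if `{u,x}` is an edge and `u < v < x`, then `{v,x}` and `{u,v}` are
edges of the same layer). -/
def OPUI [LinearOrder V] (G : TemporalGraph V) (W : Set V) : Prop :=
  ∀ t : ℕ, ∀ u ∈ W, ∀ v ∈ W, ∀ x ∈ W, u < v → v < x →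
    G.E s(u, x) t → G.E s(v, x) t ∧ G.E s(u, v) t

/-- The number of descents (strict decreases between consecutive entries) of a
list of labels; this equals the number of maximal monotonically non-decreasing
intervals minus one. -/
def descents : List ℕ → ℕ
  | [] => 0
  | [_] => 0
  | a :: b :: l => (if b < a then 1 else 0) + descents (b :: l)

end TemporalGraph


lemma support_getElem_eq_getVert {V : Type*} {G : SimpleGraph V} {u v : V}
    (p : G.Walk u v) (i : ℕ) (hi : i < p.support.length) :
    p.support[i] = p.getVert i := by
  induction p generalizing i with
  | nil =>
    simp only [SimpleGraph.Walk.support_nil, List.length_singleton] at hi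
    interval_cases i
    rfl
  | cons h q ih =>
    cases i with
    | zero => rfl
    | succ n =>
      simp only [SimpleGraph.Walk.support_cons] at hi ⊢
      simpa using ih n (by simpa using hi)

lemma TemporalGraph.pow_tau {V : Type*} (G : TemporalGraph V) (n : ℕ) :
    (TemporalGraph.pow G n).tau = n * G.tau := by
  induction n with
  | zero => simp [TemporalGraph.pow, TemporalGraph.emptyTG]
  | succ n ih =>
    show (TemporalGraph.pow G n).tau + G.tau = _
    rw [ih]; ring

lemma TemporalGraph.pow_E_of {V : Type*} (G : TemporalGraph V) (n i t : ℕ)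
    (e : Sym2 V) (hi : i < n) (h : G.E e t) :
    (TemporalGraph.pow G n).E e (i * G.tau + t) := by
  induction n with
  | zero => omega
  | succ n ih =>
    rcases Nat.lt_succ_iff_lt_or_eq.mp hi with hi' | rfl
    · exact Or.inl (ih hi')
    · refine Or.inr ?_
      have ht := G.valid e t h
      rw [TemporalGraph.pow_tau]
      constructor
      · omega
      · have : i * G.tau + t - i * G.tau = t := by omega
        rwa [this]

open TemporalGraph in
/-- if `G₁` is a single layer with edge list `L` and `G'` is the
temporal graph whose `j`-th layer consists of exactly the single edge `L[j-1]`,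
then every `(v,w)`-path `P` of length `ℓ ≤ |L|` in `G₁` gives a temporal
`(v,w)`-path in `(G')^ℓ` visiting the vertices in the same order. -/
theorem static_path_in_pow_of_one_edge_layers {V : Type*} (L : List (Sym2 V))
    (G₁ : TemporalGraph V) (hE₁ : ∀ e t, G₁.E e t ↔ (t = 1 ∧ e ∈ L))
    (G' : TemporalGraph V)
    (hE' : ∀ e t, G'.E e t ↔ (1 ≤ t ∧ t ≤ L.length ∧ L[t - 1]? = some e))
    (htau' : G'.tau = L.length)
    (v w : V) (p : G₁.underlying.Walk v w) (hp : p.IsPath)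
    (hlen : p.length ≤ L.length) :
    ∃ ts, (TemporalGraph.pow G' p.length).IsTempPath v w p.support ts := by
  classical
  set m := L.length with hm
  set l := p.length with hl
  have hedge : ∀ i, i < l → s(p.getVert i, p.getVert (i+1)) ∈ L := by
    intro i hi
    obtain ⟨hne, t, ht⟩ := (p.adj_getVert_succ hi :
      p.getVert i ≠ p.getVert (i+1) ∧ ∃ t, G₁.E s(p.getVert i, p.getVert (i+1)) t)
    exact ((hE₁ _ t).mp ht).2
  set j : ℕ → ℕ := fun i => L.idxOf (s(p.getVert i, p.getVert (i+1))) with hj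
  have hjm : ∀ i, i < l → j i < m := fun i hi =>
    List.idxOf_lt_length_iff.mpr (hedge i hi)
  have hG' : ∀ i, i < l → G'.E s(p.getVert i, p.getVert (i+1)) (j i + 1) := by
    intro i hi
    rw [hE']
    refine ⟨by omega, by have := hjm i hi; omega, ?_⟩
    simp only [Nat.add_sub_cancel]
    rw [List.getElem?_eq_getElem (hjm i hi)]
    simp [hj]
  refine ⟨List.ofFn (fun i : Fin l => i.1 * m + (j i.1 + 1)), ?_, hp.support_nodup,
    ?_, ?_, ?_, ?_⟩
  · simp [SimpleGraph.Walk.length_support, hl]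
  · rw [p.support_eq_cons]; rfl
  · rw [List.getLast?_eq_getLast p.support_ne_nil,
      SimpleGraph.Walk.getLast_support]
  · unfold List.Chain'; rw [List.isChain_iff_getElem]
    intro i hi
    simp only [List.length_ofFn] at hi
    simp only [List.get_eq_getElem, List.getElem_ofFn]
    have h1 : j i < m := hjm i (by omega)
    calc i * m + (j i + 1) ≤ i * m + m := by omega
      _ = (i + 1) * m := by ring
      _ ≤ (i + 1) * m + (j (i + 1) + 1) := Nat.le_add_right _ _
  · intro i hts hvs
    simp only [List.length_ofFn] at hts
    simp only [List.get_eq_getElem, List.getElem_ofFn]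
    rw [support_getElem_eq_getVert, support_getElem_eq_getVert]
    have := TemporalGraph.pow_E_of G' l i (j i + 1)
      s(p.getVert i, p.getVert (i+1)) hts (hG' i hts)
    rwa [htau'] at this
end

section
/- Let G be a temporal graph and G' the temporal graph obtained by replacing each layer i of G (with edge set E_i) by the |E_i|-fold concatenation of single-edge layers (one layer per edge of E_i, in some fixed order), concatenated over all i. Then a vertex set S ⊆ V \ {s,z} is a temporal (s,z)-separator in G if and only if S is a temporal (s,z)-separator in G'. In particular, each layer of G' contains at most one edge and the maximum time label of G' is at most τ·|V|⁴. -/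
namespace TemporalGraph

/-- The temporal graph whose `j`-th layer contains exactly the single edge
`L[j-1]`, for a list `L` of edges. -/
def layerTG {V : Type*} (L : List (Sym2 V)) : TemporalGraph V where
  E e t := 1 ≤ t ∧ t ≤ L.length ∧ L[t - 1]? = some e
  tau := L.length
  valid := by rintro e t ⟨h1, h2, _⟩; exact ⟨h1, h2⟩

/-- `G' = G₁^{|E₁|} ∘ G₂^{|E₂|} ∘ ⋯ ∘ G_n^{|E_n|}`, where `G_i` is the
one-edge-per-layer expansion of the edge list `L i` of layer `i`. -/
def oneEdgeExpansion {V : Type*} (L : ℕ → List (Sym2 V)) (n : ℕ) : TemporalGraph V :=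
  (List.range n).foldl
    (fun H i => H.concat (TemporalGraph.pow (layerTG (L (i + 1))) (L (i + 1)).length))
    (emptyTG V)

end TemporalGraph



namespace TemporalGraph
variable {V : Type*}

def off (L : ℕ → List (Sym2 V)) (n : ℕ) : ℕ :=
  ∑ i ∈ Finset.range n, ((L (i+1)).length)^2

lemma off_succ (L : ℕ → List (Sym2 V)) (n : ℕ) :
    off L (n+1) = off L n + ((L (n+1)).length)^2 := Finset.sum_range_succ _ _

lemma off_mono (L : ℕ → List (Sym2 V)) : Monotone (off L) := by
  intro a b hab
  exact Finset.sum_le_sum_of_subset (Finset.range_subset_range.2 hab)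

lemma pow_tau_s4 (H : TemporalGraph V) (m : ℕ) : (pow H m).tau = m * H.tau := by
  induction m with
  | zero => simp [pow, emptyTG]
  | succ k ih => show (pow H k).tau + H.tau = _; rw [ih]; ring

lemma pow_E (H : TemporalGraph V) (m : ℕ) (e : Sym2 V) (t : ℕ) :
    (pow H m).E e t ↔ ∃ k < m, k * H.tau < t ∧ H.E e (t - k * H.tau) := by
  induction m with
  | zero => simp [pow, emptyTG]
  | succ k ih =>
    show (pow H k).E e t ∨ ((pow H k).tau < t ∧ H.E e (t - (pow H k).tau)) ↔ _
    rw [ih, pow_tau_s4]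
    constructor
    · rintro (⟨j, hj, h1, h2⟩ | ⟨h1, h2⟩)
      · exact ⟨j, by omega, h1, h2⟩
      · exact ⟨k, by omega, h1, h2⟩
    · rintro ⟨j, hj, h1, h2⟩
      rcases Nat.lt_or_ge j k with h | h
      · exact Or.inl ⟨j, h, h1, h2⟩
      · have : j = k := by omega
        subst this; exact Or.inr ⟨h1, h2⟩

lemma oee_succ (L : ℕ → List (Sym2 V)) (n : ℕ) :
    oneEdgeExpansion L (n+1) =
      (oneEdgeExpansion L n).concat (pow (layerTG (L (n+1))) (L (n+1)).length) := by
  unfold oneEdgeExpansion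
  rw [List.range_succ, List.foldl_append]
  rfl

lemma oee_tau (L : ℕ → List (Sym2 V)) (n : ℕ) :
    (oneEdgeExpansion L n).tau = off L n := by
  induction n with
  | zero => rfl
  | succ k ih =>
    rw [oee_succ]
    show (oneEdgeExpansion L k).tau + (pow (layerTG (L (k+1))) (L (k+1)).length).tau = _
    rw [ih, pow_tau_s4, off_succ, layerTG]
    ring

lemma oee_E (L : ℕ → List (Sym2 V)) (n : ℕ) (e : Sym2 V) (t : ℕ) :
    (oneEdgeExpansion L n).E e t ↔
      ∃ i < n, ∃ k < (L (i+1)).length, ∃ p < (L (i+1)).length,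
        t = off L i + k * (L (i+1)).length + p + 1 ∧ (L (i+1))[p]? = some e := by
  induction n with
  | zero => simp [oneEdgeExpansion, emptyTG]
  | succ m ih =>
    rw [oee_succ]
    show (oneEdgeExpansion L m).E e t ∨ _ ↔ _
    rw [ih, oee_tau, pow_E]
    have hlt : (layerTG (L (m+1))).tau = (L (m+1)).length := rfl
    have hlE : ∀ u, (layerTG (L (m+1))).E e u ↔
        (1 ≤ u ∧ u ≤ (L (m+1)).length ∧ (L (m+1))[u-1]? = some e) := fun u => Iff.rfl
    simp only [hlt, hlE]
    constructor
    · rintro (⟨i, hi, hrest⟩ | ⟨h1, k, hk, h2, h3, h4, h5⟩)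
      · exact ⟨i, by omega, hrest⟩
      · refine ⟨m, by omega, k, hk, t - off L m - k * (L (m+1)).length - 1,
          by omega, by omega, ?_⟩
        convert h5 using 2
    · rintro ⟨i, hi, k, hk, p, hp, ht, he⟩
      rcases Nat.lt_or_ge i m with h | h
      · exact Or.inl ⟨i, h, k, hk, p, hp, ht, he⟩
      · have : i = m := by omega
        subst this
        refine Or.inr ⟨by omega, k, hk, by omega, by omega, by omega, ?_⟩
        convert he using 2
        omega


lemma sq_helper (k p m : ℕ) (hk : k < m) (hp : p < m) : k*m + p + 1 ≤ m^2 := by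
  have h5 : (k+1) * m ≤ m * m := Nat.mul_le_mul_right m hk
  rw [add_mul, one_mul] at h5
  rw [pow_two]
  omega

lemma oee_unique (L : ℕ → List (Sym2 V)) (n : ℕ) (t : ℕ) (e₁ e₂ : Sym2 V)
    (h₁ : (oneEdgeExpansion L n).E e₁ t) (h₂ : (oneEdgeExpansion L n).E e₂ t) :
    e₁ = e₂ := by
  rw [oee_E] at h₁ h₂
  obtain ⟨i, hi, k, hk, p, hp, ht, he⟩ := h₁
  obtain ⟨i', hi', k', hk', p', hp', ht', he'⟩ := h₂
  have hii : i = i' := by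
    by_contra hne
    rcases Nat.lt_or_ge i i' with h | h
    · have h1 : off L (i+1) ≤ off L i' := off_mono L h
      have h2 : off L (i+1) = off L i + ((L (i+1)).length)^2 := off_succ L i
      have := sq_helper k p _ hk hp
      omega
    · have h : i' < i := by omega
      have h1 : off L (i'+1) ≤ off L i := off_mono L h
      have h2 : off L (i'+1) = off L i' + ((L (i'+1)).length)^2 := off_succ L i'
      have := sq_helper k' p' _ hk' hp'
      omega
  subst hii
  have hm : k * (L (i+1)).length + p = k' * (L (i+1)).length + p' := by omega
  have hpp : p = p' := by
    have e1 : (k * (L (i+1)).length + p) % (L (i+1)).length = p := by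
      rw [mul_comm, Nat.mul_add_mod]; exact Nat.mod_eq_of_lt hp
    have e2 : (k' * (L (i+1)).length + p') % (L (i+1)).length = p' := by
      rw [mul_comm, Nat.mul_add_mod]; exact Nat.mod_eq_of_lt hp'
    rw [← e1, ← e2, hm]
  subst hpp
  rw [he] at he'
  exact Option.some.inj he'

lemma oee_tau_le (L : ℕ → List (Sym2 V)) [Fintype V] (n : ℕ)
    (hNodup : ∀ i, (L i).Nodup) :
    (oneEdgeExpansion L n).tau ≤ n * Fintype.card V ^ 4 := by
  classical
  rw [oee_tau]
  have hbound : ∀ i, (L i).length ≤ Fintype.card V ^ 2 := by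
    intro i
    have h1 : (L i).length ≤ Fintype.card (Sym2 V) := by
      classical
      have := (L i).toFinset.card_le_univ
      rwa [List.toFinset_card_of_nodup (hNodup i)] at this
    have h2 : Fintype.card (Sym2 V) ≤ Fintype.card V ^ 2 := by
      rw [Sym2.card]
      set c := Fintype.card V with hc
      rw [Nat.choose_two_right]
      apply Nat.div_le_of_le_mul
      have h3 : (c+1) * (c+1-1) = c * c + c := by rw [Nat.add_sub_cancel]; ring
      rcases Nat.eq_zero_or_pos c with h | h
      · simp [h]
      · have h4 : c ≤ c * c := Nat.le_mul_of_pos_left c h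
        rw [pow_two]
        omega
    omega
  calc off L n ≤ ∑ i ∈ Finset.range n, (Fintype.card V ^ 2)^2 := by
        apply Finset.sum_le_sum
        intro i _
        exact Nat.pow_le_pow_left (hbound (i+1)) 2
    _ = n * Fintype.card V ^ 4 := by
        rw [Finset.sum_const, Finset.card_range, ← pow_mul]
        simp [smul_eq_mul]


lemma f_eval (L : ℕ → List (Sym2 V)) (n t i₀ : ℕ) (hi : i₀ < n)
    (h1 : off L i₀ < t) (h2 : t ≤ off L (i₀+1)) :
    ((Finset.range n).filter (fun i => off L i < t)).card = i₀ + 1 := by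
  have heq : (Finset.range n).filter (fun i => off L i < t) = Finset.range (i₀+1) := by
    ext j
    simp only [Finset.mem_filter, Finset.mem_range]
    constructor
    · rintro ⟨hj, hoj⟩
      by_contra hcon
      push_neg at hcon
      have := off_mono L hcon
      omega
    · intro hj
      have hj' : j ≤ i₀ := by omega
      have := off_mono L hj'
      exact ⟨by omega, by omega⟩
  rw [heq, Finset.card_range]

lemma path_back (G : TemporalGraph V) (L : ℕ → List (Sym2 V))
    (hL : ∀ e t, G.E e t ↔ (1 ≤ t ∧ t ≤ G.tau ∧ e ∈ L t))
    (S : Set V) (s z : V) (vs : List V) (ts : List ℕ)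
    (h : ((oneEdgeExpansion L G.tau).del S).IsTempPath s z vs ts) :
    ∃ ts', (G.del S).IsTempPath s z vs ts' := by
  classical
  obtain ⟨hlen, hnd, hhd, hlast, hch, hedge⟩ := h
  set n := G.tau with hn
  set f : ℕ → ℕ := fun t => ((Finset.range n).filter (fun i => off L i < t)).card with hf
  have hfmono : ∀ a b, a ≤ b → f a ≤ f b := by
    intro a b hab
    apply Finset.card_le_card
    intro x hx
    simp only [Finset.mem_filter] at hx ⊢
    exact ⟨hx.1, by omega⟩
  refine ⟨ts.map f, by simpa using hlen, hnd, hhd, hlast, ?_, ?_⟩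
  · unfold List.Chain' at hch ⊢
    rw [List.isChain_iff_getElem] at hch ⊢
    intro i hi
    simp only [List.length_map] at hi
    rw [List.getElem_map, List.getElem_map]
    exact hfmono _ _ (hch i hi)
  · intro i hts hvs
    simp only [List.length_map] at hts
    have hE := hedge i hts hvs
    obtain ⟨hE', hS⟩ := hE
    rw [oee_E] at hE'
    obtain ⟨i₀, hi₀, k, hk, p, hp, ht, he⟩ := hE'
    have hub : ts.get ⟨i, hts⟩ ≤ off L (i₀+1) := by
      have := sq_helper k p _ hk hp
      have := off_succ L i₀
      omega
    have hfv : (ts.map f).get ⟨i, by simpa using hts⟩ = i₀ + 1 := by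
      rw [List.get_eq_getElem, List.getElem_map]
      show f (ts.get ⟨i, hts⟩) = i₀ + 1
      exact f_eval L n _ i₀ hi₀ (by omega) hub
    rw [hfv]
    show (G.E _ _ ∧ _)
    refine ⟨(hL _ _).2 ⟨by omega, by omega, List.mem_of_getElem? he⟩, hS⟩


lemma path_fwd (G : TemporalGraph V) (L : ℕ → List (Sym2 V))
    (hNodup : ∀ i, (L i).Nodup)
    (hL : ∀ e t, G.E e t ↔ (1 ≤ t ∧ t ≤ G.tau ∧ e ∈ L t))
    (S : Set V) (s z : V) (vs : List V) (ts : List ℕ)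
    (h : (G.del S).IsTempPath s z vs ts) :
    ∃ ts', ((oneEdgeExpansion L G.tau).del S).IsTempPath s z vs ts' := by
  classical
  obtain ⟨hlen, hnd, hhd, hlast, hch, hedge⟩ := h
  set n := G.tau with hn
  set tj : ℕ → ℕ := fun j => ts.getD j 0 with htj
  set ej : ℕ → Sym2 V := fun j => s(vs.getD j s, vs.getD (j+1) s) with hej
  set pj : ℕ → ℕ := fun j => (L (tj j)).idxOf (ej j) with hpj
  set cj : ℕ → ℕ := fun j => ((Finset.range j).filter (fun j' => tj j' = tj j)).card with hcj
  set F : ℕ → ℕ := fun j => off L (tj j - 1) + cj j * (L (tj j)).length + pj j + 1 with hF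
  -- basic facts
  have hts_get : ∀ (j : ℕ) (hj : j < ts.length), ts.get ⟨j, hj⟩ = tj j := by
    intro j hj
    rw [htj]
    exact (List.getD_eq_getElem ts 0 hj).symm
  have hvs_get : ∀ (j : ℕ) (hj : j < vs.length), vs.get ⟨j, hj⟩ = vs.getD j s := by
    intro j hj
    exact (List.getD_eq_getElem vs s hj).symm
  have hE : ∀ j, j < ts.length → (G.del S).E (ej j) (tj j) := by
    intro j hj
    have hvj : j + 1 < vs.length := by omega
    have := hedge j hj hvj
    rwa [hts_get j hj, hvs_get j (by omega), hvs_get (j+1) hvj] at this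
  have hmem : ∀ j, j < ts.length → ej j ∈ L (tj j) ∧ 1 ≤ tj j ∧ tj j ≤ n := by
    intro j hj
    have := (hL _ _).1 (hE j hj).1
    exact ⟨this.2.2, this.1, this.2.1⟩
  have hp : ∀ j, j < ts.length → pj j < (L (tj j)).length := by
    intro j hj
    exact List.idxOf_lt_length_iff.2 (hmem j hj).1
  have hpe : ∀ j (hj : j < ts.length), (L (tj j)).get ⟨pj j, hp j hj⟩ = ej j := by
    intro j hj
    exact List.idxOf_get _
  -- edge injectivity
  have hejinj : ∀ a b, a < ts.length → b < ts.length → ej a = ej b → a = b := by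
    intro a b ha hb hab
    have ha1 : a + 1 < vs.length := by omega
    have hb1 : b + 1 < vs.length := by omega
    rw [hej] at hab
    simp only at hab
    rw [← hvs_get a (by omega), ← hvs_get (a+1) ha1,
        ← hvs_get b (by omega), ← hvs_get (b+1) hb1] at hab
    rcases Sym2.eq_iff.1 hab with ⟨h1, h2⟩ | ⟨h1, h2⟩
    · have h3 : (⟨a, by omega⟩ : Fin vs.length) = ⟨b, by omega⟩ := (hnd.get_inj_iff).1 h1
      exact Fin.mk_eq_mk.1 h3
    · have e1 : (⟨a, by omega⟩ : Fin vs.length) = ⟨b+1, hb1⟩ := (hnd.get_inj_iff).1 h1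
      have e2 : (⟨a+1, ha1⟩ : Fin vs.length) = ⟨b, by omega⟩ := (hnd.get_inj_iff).1 h2
      have e1' : a = b + 1 := Fin.mk_eq_mk.1 e1
      have e2' : a + 1 = b := Fin.mk_eq_mk.1 e2
      omega
  -- the counter bound
  have hcount : ∀ j, j < ts.length →
      ((Finset.range (j+1)).filter (fun j' => tj j' = tj j)).card = cj j + 1 := by
    intro j hj
    rw [Finset.range_add_one, Finset.filter_insert, if_pos rfl,
        Finset.card_insert_of_notMem (by simp)]
  have hc : ∀ j, j < ts.length → cj j < (L (tj j)).length := by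
    intro j hj
    have hle : ((Finset.range (j+1)).filter (fun j' => tj j' = tj j)).card ≤
        (Finset.range ((L (tj j)).length)).card := by
      apply Finset.card_le_card_of_injOn pj
      · intro a hamem
        simp only [Finset.coe_filter, Set.mem_setOf_eq, Finset.mem_filter, Finset.mem_range, Finset.coe_range, Set.mem_Iio, Finset.mem_coe] at hamem ⊢
        have haj : a < ts.length := by omega
        have := hp a haj
        rw [hamem.2] at this
        exact this
      · intro a hamem b hbmem hab
        simp only [Finset.coe_filter, Set.mem_setOf_eq, Finset.mem_range] at hamem hbmem
        have haj : a < ts.length := by omega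
        have hbj : b < ts.length := by omega
        apply hejinj a b haj hbj
        have o1 : (L (tj a))[pj a]? = some (ej a) := by
          rw [List.getElem?_eq_getElem (hp a haj)]
          exact congrArg some (hpe a haj)
        have o2 : (L (tj b))[pj b]? = some (ej b) := by
          rw [List.getElem?_eq_getElem (hp b hbj)]
          exact congrArg some (hpe b hbj)
        rw [hamem.2, hab] at o1
        rw [hbmem.2] at o2
        exact Option.some.inj (o1.symm.trans o2)
    rw [hcount j hj, Finset.card_range] at hle
    omega
  have hcstep : ∀ j, j + 1 < ts.length → tj j = tj (j+1) → cj (j+1) = cj j + 1 := by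
    intro j hj heq
    show ((Finset.range (j+1)).filter (fun j' => tj j' = tj (j+1))).card = cj j + 1
    have hfe : (Finset.range (j+1)).filter (fun j' => tj j' = tj (j+1)) =
        (Finset.range (j+1)).filter (fun j' => tj j' = tj j) := by
      apply Finset.filter_congr
      intro x _
      rw [heq]
    rw [hfe, hcount j (by omega)]
  have hchain : ∀ j, j + 1 < ts.length → F j < F (j+1) := by
    intro j hj
    have hj0 : j < ts.length := by omega
    have hmono : tj j ≤ tj (j+1) := by
      unfold List.Chain' at hch
      rw [List.isChain_iff_getElem] at hch
      have := hch j (by omega)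
      rw [← hts_get j (by omega), ← hts_get (j+1) hj]; exact this
    rcases eq_or_lt_of_le hmono with heq | hlt
    · have hc1 := hcstep j hj heq
      have hplt := hp j hj0
      have hplt' := hp (j+1) (by omega)
      rw [← heq] at hplt'
      have hkey : F (j+1) = off L (tj j - 1) + (cj j + 1) * (L (tj j)).length + pj (j+1) + 1 := by
        show off L (tj (j+1) - 1) + cj (j+1) * (L (tj (j+1))).length + pj (j+1) + 1 = _
        rw [← heq, hc1]
      rw [hkey]
      show off L (tj j - 1) + cj j * (L (tj j)).length + pj j + 1 < _
      have hexp : (cj j + 1) * (L (tj j)).length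
          = cj j * (L (tj j)).length + (L (tj j)).length := by ring
      omega
    · have h1 : F j ≤ off L (tj j) := by
        have hsq := sq_helper (cj j) (pj j) _ (hc j hj0) (hp j hj0)
        have ho := off_succ L (tj j - 1)
        have h1t : 1 ≤ tj j := (hmem j hj0).2.1
        have hrw : tj j - 1 + 1 = tj j := by omega
        rw [hrw] at ho
        show off L (tj j - 1) + cj j * (L (tj j)).length + pj j + 1 ≤ _
        omega
      have h2 : off L (tj j) ≤ off L (tj (j+1) - 1) := off_mono L (by omega)
      have h3 : off L (tj (j+1) - 1) < F (j+1) := by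
        show _ < off L (tj (j+1) - 1) + _ + _ + 1
        omega
      omega
  refine ⟨(List.range ts.length).map F, by simp [hlen], hnd, hhd, hlast, ?_, ?_⟩
  · unfold List.Chain'
    rw [List.isChain_iff_getElem]
    intro i hi
    simp only [List.length_map, List.length_range] at hi
    rw [List.getElem_map, List.getElem_map]
    rw [List.getElem_range, List.getElem_range]
    exact le_of_lt (hchain i (by omega))
  · intro i hts hvs
    have hts2 : i < ts.length := by simpa using hts
    have htime : (List.map F (List.range ts.length)).get ⟨i, hts⟩ = F i := by
      rw [List.get_eq_getElem, List.getElem_map]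
      exact congrArg F (List.getElem_range _)
    rw [htime, hvs_get i (by omega), hvs_get (i+1) hvs]
    show ((oneEdgeExpansion L n).E (ej i) (F i)) ∧ _
    refine ⟨?_, (hE i hts2).2⟩
    rw [oee_E]
    have h1t : 1 ≤ tj i := (hmem i hts2).2.1
    have h2t : tj i ≤ n := (hmem i hts2).2.2
    have hrw : tj i - 1 + 1 = tj i := by omega
    refine ⟨tj i - 1, by omega, cj i, ?_, pj i, ?_, ?_, ?_⟩
    · rw [hrw]; exact hc i hts2
    · rw [hrw]; exact hp i hts2
    · rw [hrw]
    · rw [hrw, List.getElem?_eq_getElem (hp i hts2)]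
      exact congrArg some (hpe i hts2)

end TemporalGraph

open TemporalGraph in
/-- replacing each layer `i` of `G` (with edge list `L i`) by the
`|E_i|`-fold concatenation of one-edge layers yields a temporal graph `G'` with
the same temporal `(s,z)`-separators, in which every layer has at most one edge
and whose maximum label is at most `τ·|V|⁴`. -/
theorem one_edge_expansion_equiv {V : Type*} [Fintype V] (G : TemporalGraph V)
    (L : ℕ → List (Sym2 V)) (hNodup : ∀ i, (L i).Nodup)
    (hL : ∀ e t, G.E e t ↔ (1 ≤ t ∧ t ≤ G.tau ∧ e ∈ L t))
    (s z : V) (hsz : s ≠ z) :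
    (∀ S : Set V, s ∉ S → z ∉ S →
        (G.IsSep s z S ↔ (oneEdgeExpansion L G.tau).IsSep s z S)) ∧
    (∀ t e₁ e₂, (oneEdgeExpansion L G.tau).E e₁ t →
        (oneEdgeExpansion L G.tau).E e₂ t → e₁ = e₂) ∧
    (oneEdgeExpansion L G.tau).tau ≤ G.tau * Fintype.card V ^ 4 := by
  refine ⟨?_, fun t e₁ e₂ h₁ h₂ => oee_unique L G.tau t e₁ e₂ h₁ h₂,
    oee_tau_le L G.tau hNodup⟩
  intro S hs hz
  constructor
  · intro hsep hcon
    obtain ⟨vs, ts, hpath⟩ := hcon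
    obtain ⟨ts', hpath'⟩ := path_back G L hL S s z vs ts hpath
    exact hsep ⟨vs, ts', hpath'⟩
  · intro hsep hcon
    obtain ⟨vs, ts, hpath⟩ := hcon
    obtain ⟨ts', hpath'⟩ := path_fwd G L hNodup hL S s z vs ts hpath
    exact hsep ⟨vs, ts', hpath'⟩
end

section
/- Let G = (V, E, τ) be an order-preserving temporal unit interval graph with compatible total order <_V on V. If for some vertices v_i <_V v_j there is a temporal (v_i, v_j)-path P in G, then there is a temporal (v_i, v_j)-path P' in G that visits its vertices in increasing order with respect to <_V. -/
namespace TemporalGraph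

variable {V : Type*}

/-- An inductive characterization of temporal walks (no nodup requirement). -/
inductive TPath (G : TemporalGraph V) : V → V → List V → List ℕ → Prop where
  | single (v : V) : TPath G v v [v] []
  | cons {u v z : V} {vs : List V} {ts : List ℕ} {t : ℕ}
      (h : G.E s(u, v) t) (hle : ∀ t' ∈ ts, t ≤ t') (hp : TPath G v z vs ts) :
      TPath G u z (u :: vs) (t :: ts)

theorem TPath.head_eq {G : TemporalGraph V} {s z : V} {vs : List V} {ts : List ℕ}
    (hp : TPath G s z vs ts) : ∃ l, vs = s :: l := by
  cases hp with
  | single v => exact ⟨[], rfl⟩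
  | cons h hle hp => exact ⟨_, rfl⟩

theorem TPath.length_eq {G : TemporalGraph V} {s z : V} {vs : List V} {ts : List ℕ}
    (hp : TPath G s z vs ts) : vs.length = ts.length + 1 := by
  induction hp with
  | single v => rfl
  | cons h hle hp ih => simp [ih]

theorem TPath.getLast?_eq {G : TemporalGraph V} {s z : V} {vs : List V} {ts : List ℕ}
    (hp : TPath G s z vs ts) : vs.getLast? = some z := by
  induction hp with
  | single v => rfl
  | cons h hle hp ih =>
    obtain ⟨l, rfl⟩ := hp.head_eq
    rw [← ih]
    rfl

theorem TPath.pairwise {G : TemporalGraph V} {s z : V} {vs : List V} {ts : List ℕ}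
    (hp : TPath G s z vs ts) : ts.Pairwise (· ≤ ·) := by
  induction hp with
  | single v => exact List.Pairwise.nil
  | cons h hle hp ih => exact List.Pairwise.cons hle ih

theorem TPath.edge {G : TemporalGraph V} {s z : V} {vs : List V} {ts : List ℕ}
    (hp : TPath G s z vs ts) :
    ∀ (i : ℕ) (hts : i < ts.length) (hvs : i + 1 < vs.length),
      G.E s(vs.get ⟨i, Nat.lt_of_succ_lt hvs⟩, vs.get ⟨i + 1, hvs⟩) (ts.get ⟨i, hts⟩) := by
  induction hp with
  | single v => intro i hts; simp at hts
  | cons h hle hp ih =>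
    intro i hts hvs
    match i with
    | 0 =>
      obtain ⟨l, rfl⟩ := hp.head_eq
      simpa using h
    | j + 1 =>
      have hts' : j < _ := Nat.lt_of_succ_lt_succ hts
      have hvs' : j + 1 < _ := Nat.lt_of_succ_lt_succ hvs
      simpa using ih j hts' hvs'

theorem TPath.isTempPath {G : TemporalGraph V} {s z : V} {vs : List V} {ts : List ℕ}
    (hp : TPath G s z vs ts) (hnd : vs.Nodup) : G.IsTempPath s z vs ts := by
  obtain ⟨l, hl⟩ := hp.head_eq
  refine ⟨hp.length_eq, hnd, ?_, hp.getLast?_eq, ?_, hp.edge⟩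
  · rw [hl]; rfl
  · exact List.isChain_iff_pairwise.mpr hp.pairwise

theorem IsTempPath.tpath {G : TemporalGraph V} {s z : V} {vs : List V} {ts : List ℕ}
    (h : G.IsTempPath s z vs ts) : TPath G s z vs ts := by
  induction ts generalizing vs s with
  | nil =>
    obtain ⟨hlen, _, hhead, hlast, _, _⟩ := h
    match vs, hlen with
    | [a], _ =>
      simp only [List.head?_cons, Option.some.injEq] at hhead
      simp only [List.getLast?_singleton, Option.some.injEq] at hlast
      subst hhead; subst hlast
      exact TPath.single a
  | cons t ts' ih =>
    obtain ⟨hlen, hnd, hhead, hlast, hch, hedge⟩ := h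
    match vs, hlen with
    | a :: b :: l, hlen =>
      simp only [List.head?_cons, Option.some.injEq] at hhead
      subst hhead
      have hpw := List.isChain_iff_pairwise.mp hch
      rw [List.pairwise_cons] at hpw
      have htail : G.IsTempPath b z (b :: l) ts' := by
        refine ⟨by simpa using hlen, hnd.of_cons, rfl, by rw [← hlast]; rfl,
          List.isChain_iff_pairwise.mpr hpw.2, ?_⟩
        intro i hts hvs
        have h1 : i + 1 < (t :: ts').length := by simpa using Nat.succ_lt_succ hts
        have h2 : i + 1 + 1 < (a :: b :: l).length := by simpa using Nat.succ_lt_succ hvs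
        simpa using hedge (i + 1) h1 h2
      have he : G.E s(a, b) t := by
        have h1 : 0 < (t :: ts').length := by simp
        have h2 : 0 + 1 < (a :: b :: l).length := by simp
        simpa using hedge 0 h1 h2
      exact TPath.cons he hpw.1 (ih htail)

section Sorted

variable [LinearOrder V]

/-- Cutting into a sorted temporal path at an intermediate vertex. -/
theorem TPath.cut {G : TemporalGraph V} (hG : OPUI G Set.univ) {a z : V} {vs : List V}
    {ts : List ℕ} (hp : TPath G a z vs ts) :
    ∀ b : V, List.Pairwise (· < ·) vs → a < b → b < z →
      ∃ vs' ts', TPath G b z vs' ts' ∧ List.Pairwise (· < ·) vs' ∧ ∀ t' ∈ ts', t' ∈ ts := by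
  induction hp with
  | single v =>
    intro b _ hab hbz
    exact absurd (hab.trans hbz) (lt_irrefl v)
  | cons h hle hp ih =>
    rename_i u v z vs ts t
    intro b hs hab hbz
    rw [List.pairwise_cons] at hs
    obtain ⟨l, hl⟩ := hp.head_eq
    have huv : u < v := hs.1 v (by rw [hl]; exact List.mem_cons_self)
    rcases lt_trichotomy b v with hbv | hbv | hbv
    · have he := (hG t u (Set.mem_univ u) b (Set.mem_univ b) v (Set.mem_univ v) hab hbv h).1
      refine ⟨b :: vs, t :: ts, TPath.cons he hle hp, ?_, fun x hx => hx⟩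
      rw [List.pairwise_cons]
      refine ⟨?_, hs.2⟩
      intro x hx
      rw [hl] at hx
      rcases List.mem_cons.mp hx with rfl | hx'
      · exact hbv
      · rw [hl] at hs
        exact hbv.trans ((List.pairwise_cons.mp hs.2).1 x hx')
    · subst hbv
      exact ⟨vs, ts, hp, hs.2, fun x hx => List.mem_cons_of_mem _ hx⟩
    · obtain ⟨vs', ts', hp', hs', hsub⟩ := ih b hs.2 hbv hbz
      exact ⟨vs', ts', hp', hs', fun x hx => List.mem_cons_of_mem _ (hsub x hx)⟩

/-- Main lemma: any temporal walk from `s` to `z` with `s < z` can be turned into a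
sorted one using a subset of the time labels. -/
theorem TPath.sorted_of_lt {G : TemporalGraph V} (hG : OPUI G Set.univ) {s z : V}
    {vs : List V} {ts : List ℕ} (hp : TPath G s z vs ts) :
    s < z →
      ∃ vs' ts', TPath G s z vs' ts' ∧ List.Pairwise (· < ·) vs' ∧ ∀ t' ∈ ts', t' ∈ ts := by
  induction hp with
  | single v => intro hlt; exact absurd hlt (lt_irrefl v)
  | cons h hle hp ih =>
    rename_i u v z vs ts t
    intro hsz
    rcases lt_trichotomy v z with hvz | hvz | hvz
    · rcases lt_trichotomy u v with huv | huv | huv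
      · obtain ⟨vs', ts', hp', hs', hsub⟩ := ih hvz
        obtain ⟨l, hl⟩ := hp'.head_eq
        refine ⟨u :: vs', t :: ts',
          TPath.cons h (fun t' ht' => hle t' (hsub t' ht')) hp', ?_,
          fun x hx => ?_⟩
        · rw [List.pairwise_cons]
          refine ⟨?_, hs'⟩
          intro x hx
          rw [hl] at hx
          rcases List.mem_cons.mp hx with rfl | hx'
          · exact huv
          · exact huv.trans (by rw [hl] at hs'; exact (List.pairwise_cons.mp hs').1 x hx')
        · rcases List.mem_cons.mp hx with rfl | hx'
          · exact List.mem_cons_self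
          · exact List.mem_cons_of_mem _ (hsub x hx')
      · subst huv
        obtain ⟨vs', ts', hp', hs', hsub⟩ := ih hvz
        exact ⟨vs', ts', hp', hs', fun x hx => List.mem_cons_of_mem _ (hsub x hx)⟩
      · obtain ⟨vs', ts', hp', hs', hsub⟩ := ih hvz
        obtain ⟨vs'', ts'', hp'', hs'', hsub'⟩ := hp'.cut hG u hs' huv hsz
        exact ⟨vs'', ts'', hp'', hs'',
          fun x hx => List.mem_cons_of_mem _ (hsub x (hsub' x hx))⟩
    · subst hvz
      refine ⟨[u, v], [t], TPath.cons h (by simp) (TPath.single v), ?_, by simp⟩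
      simp [List.pairwise_cons, hsz]
    · have he := (hG t u (Set.mem_univ u) z (Set.mem_univ z) v (Set.mem_univ v) hsz hvz h).2
      refine ⟨[u, z], [t], TPath.cons he (by simp) (TPath.single z), ?_, by simp⟩
      simp [List.pairwise_cons, hsz]

end Sorted

end TemporalGraph

open TemporalGraph in
/-- in an order-preserving temporal unit interval graph, if there
is a temporal `(v_i, v_j)`-path for `v_i < v_j`, then there is one visiting its
vertices in increasing order. -/
theorem exists_sorted_temp_path {V : Type*} [LinearOrder V] (G : TemporalGraph V)
    (hG : OPUI G Set.univ) (vi vj : V) (hij : vi < vj)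
    (vs : List V) (ts : List ℕ) (h : G.IsTempPath vi vj vs ts) :
    ∃ vs' ts', G.IsTempPath vi vj vs' ts' ∧ List.Pairwise (· < ·) vs' := by
  obtain ⟨vs', ts', hp', hs', _⟩ := h.tpath.sorted_of_lt hG hij
  exact ⟨vs', ts', hp'.isTempPath hs'.nodup, hs'⟩
end

section
/- Let G = (V, E, τ) be an order-preserving temporal unit interval graph with compatible order <_V, and let S be a temporal (v_i, v_j)-separator in G for vertices v_i <_V v_j. Then S' = S \ ({v : v <_V v_i} ∪ {v : v_j <_V v}) is also a temporal (v_i, v_j)-separator in G. -/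
open TemporalGraph in
/-- in an order-preserving temporal unit interval graph, removing
from a temporal `(v_i, v_j)`-separator all vertices outside the interval
`[v_i, v_j]` still yields a temporal `(v_i, v_j)`-separator. -/
theorem sep_restrict_to_interval {V : Type*} [LinearOrder V] (G : TemporalGraph V)
    (hG : OPUI G Set.univ) (vi vj : V) (hij : vi < vj) (S : Set V)
    (h : G.IsSep vi vj S) :
    G.IsSep vi vj (S \ ({v | v < vi} ∪ {v | vj < v})) := by
  set S' : Set V := S \ ({v | v < vi} ∪ {v | vj < v}) with hS'def
  rintro ⟨vs, ts, hlen, hnd, hhd, hlast, hchain, hedge⟩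
  apply h
  set n := ts.length with hn
  have hvlen : vs.length = n + 1 := hlen
  set vfun : ℕ → V := fun m => vs.getD m vi with hvfun
  set tfun : ℕ → ℕ := fun m => ts.getD m 0 with htfun
  -- basic index conversions
  have hv0 : vfun 0 = vi := by
    have h1 : vs.head? = some (vfun 0) := by
      rw [List.head?_eq_getElem?, List.getElem?_eq_getElem (show 0 < vs.length by omega)]
      show _ = some (vs.getD 0 vi)
      rw [List.getD_eq_getElem vs vi (show 0 < vs.length by omega)]
    exact Option.some.inj (h1.symm.trans hhd)
  have hvn : vfun n = vj := by
    have h1 : vs.getLast? = some (vfun n) := by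
      rw [List.getLast?_eq_getElem?, show vs.length - 1 = n by omega,
        List.getElem?_eq_getElem (show n < vs.length by omega)]
      show _ = some (vs.getD n vi)
      rw [List.getD_eq_getElem vs vi (show n < vs.length by omega)]
    exact Option.some.inj (h1.symm.trans hlast)
  have hchain' : ∀ i, i + 1 < n → tfun i ≤ tfun (i + 1) := by
    intro i hi
    have h1 := List.isChain_iff_getElem.mp hchain i (by omega)
    show ts.getD i 0 ≤ ts.getD (i + 1) 0
    rw [List.getD_eq_getElem ts 0 (show i < ts.length by omega),
      List.getD_eq_getElem ts 0 (show i + 1 < ts.length by omega)]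
    exact h1
  have hedge' : ∀ i, i < n → (G.del S').E s(vfun i, vfun (i + 1)) (tfun i) := by
    intro i hi
    have he := hedge i (by omega) (by omega)
    have e1 : vfun i = vs.get ⟨i, by omega⟩ := by
      show vs.getD i vi = _
      rw [List.getD_eq_getElem vs vi (show i < vs.length by omega)]
      simp [List.get_eq_getElem]
    have e2 : vfun (i + 1) = vs.get ⟨i + 1, by omega⟩ := by
      show vs.getD (i + 1) vi = _
      rw [List.getD_eq_getElem vs vi (show i + 1 < vs.length by omega)]
      simp [List.get_eq_getElem]
    have e3 : tfun i = ts.get ⟨i, by omega⟩ := by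
      show ts.getD i 0 = _
      rw [List.getD_eq_getElem ts 0 (show i < ts.length by omega)]
      simp [List.get_eq_getElem]
    rw [e1, e2, e3]
    exact he
  have hinj : ∀ p q, p ≤ n → q ≤ n → vfun p = vfun q → p = q := by
    intro p q hp hq hpq
    have e1 : vfun p = vs.get ⟨p, by omega⟩ := by
      show vs.getD p vi = _
      rw [List.getD_eq_getElem vs vi (show p < vs.length by omega)]
      simp [List.get_eq_getElem]
    have e2 : vfun q = vs.get ⟨q, by omega⟩ := by
      show vs.getD q vi = _
      rw [List.getD_eq_getElem vs vi (show q < vs.length by omega)]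
      simp [List.get_eq_getElem]
    rw [e1, e2] at hpq
    have := (hnd.get_inj_iff).mp hpq
    exact congrArg Fin.val this
  have hn1 : 1 ≤ n := by
    by_contra hc
    have h0 : n = 0 := by omega
    rw [h0, hv0] at hvn
    exact absurd hvn (ne_of_lt hij)
  have hS'all : ∀ m, m ≤ n → vfun m ∉ S' := by
    intro m hm
    rcases Nat.lt_or_ge m n with hlt | hge
    · exact (hedge' m hlt).2 _ (Sym2.mem_mk_left _ _)
    · have h2 := (hedge' (n - 1) (by omega)).2 _ (Sym2.mem_mk_right (vfun (n - 1)) (vfun (n - 1 + 1)))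
      rw [show n - 1 + 1 = n by omega] at h2
      rw [show m = n by omega]
      exact h2
  have hnotS : ∀ w, vi ≤ w → w ≤ vj → w ∉ S' → w ∉ S := by
    intro w h1 h2 hw hwS
    apply hw
    rw [hS'def]
    refine ⟨hwS, ?_⟩
    rintro (h3 | h3) <;> simp only [Set.mem_setOf_eq] at h3
    · exact absurd h3 (not_lt.mpr h1)
    · exact absurd h3 (not_lt.mpr h2)
  -- the pivot indices a and b
  set a := Nat.findGreatest (fun m => vfun m ≤ vi) n with ha_def
  have ha_le : a ≤ n := Nat.findGreatest_le n
  have haP : vfun a ≤ vi := Nat.findGreatest_spec (P := fun m => vfun m ≤ vi) (Nat.zero_le n) (le_of_eq hv0)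
  have ha_gt : ∀ m, a < m → m ≤ n → vi < vfun m := fun m h1 h2 =>
    lt_of_not_ge (Nat.findGreatest_is_greatest h1 h2)
  have ha_lt : a < n := by
    rcases Nat.lt_or_ge a n with h1 | h1
    · exact h1
    · exfalso
      rw [show a = n by omega, hvn] at haP
      exact absurd haP (not_le.mpr hij)
  have hQ : ∃ m, a < m ∧ vj ≤ vfun m := ⟨n, ha_lt, le_of_eq hvn.symm⟩
  set b := Nat.find hQ with hb_def
  obtain ⟨hab, hbP⟩ : a < b ∧ vj ≤ vfun b := Nat.find_spec hQ
  have hb_le : b ≤ n := Nat.find_min' hQ ⟨ha_lt, le_of_eq hvn.symm⟩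
  have hb_min : ∀ m, a < m → m < b → vfun m < vj := fun m h1 h2 =>
    lt_of_not_ge fun hc => Nat.find_min hQ h2 ⟨h1, hc⟩
  set L := b - a with hL
  have hL1 : 1 ≤ L := by omega
  -- the sandwich helpers
  have hsand1 : ∀ (t : ℕ) (u x : V), u ≤ vi → vi < x → G.E s(u, x) t → G.E s(vi, x) t := by
    intro t u x h1 h2 he
    rcases eq_or_lt_of_le h1 with hEq | hlt
    · rwa [hEq] at he
    · exact (hG t u trivial vi trivial x trivial hlt h2 he).1
  have hsand2 : ∀ (t : ℕ) (u x : V), u < vj → vj ≤ x → G.E s(u, x) t → G.E s(u, vj) t := by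
    intro t u x h1 h2 he
    rcases eq_or_lt_of_le h2 with hEq | hlt
    · rwa [← hEq] at he
    · exact (hG t u trivial vj trivial x trivial h1 hlt he).2
  -- the new vertex function
  set g : ℕ → V := fun m => if m = 0 then vi else if m = L then vj else vfun (a + m) with hg
  have hg0 : g 0 = vi := by simp [hg]
  have hgL : g L = vj := by
    show (if L = 0 then vi else if L = L then vj else vfun (a + L)) = vj
    rw [if_neg (by omega), if_pos rfl]
  have hgmid : ∀ m, 0 < m → m < L → g m = vfun (a + m) := by
    intro m h1 h2
    show (if m = 0 then vi else if m = L then vj else vfun (a + m)) = _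
    rw [if_neg (by omega), if_neg (by omega)]
  have hclass : ∀ r, r ≤ L → (r = 0 ∧ g r = vi) ∨ (r = L ∧ g r = vj) ∨
      (0 < r ∧ r < L ∧ g r = vfun (a + r) ∧ vi < g r ∧ g r < vj) := by
    intro r hr
    rcases Nat.eq_zero_or_pos r with h0 | h0
    · exact Or.inl ⟨h0, by rw [h0]; exact hg0⟩
    rcases eq_or_lt_of_le hr with hL' | hL'
    · exact Or.inr (Or.inl ⟨hL', by rw [hL']; exact hgL⟩)
    · have hm := hgmid r h0 hL'
      refine Or.inr (Or.inr ⟨h0, hL', hm, ?_, ?_⟩) <;> rw [hm]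
      · exact ha_gt _ (by omega) (by omega)
      · exact hb_min _ (by omega) (by omega)
  have hginj : ∀ p q, p ≤ L → q ≤ L → g p = g q → p = q := by
    intro p q hp hq hpq
    rcases hclass p hp with ⟨hp1, hp2⟩ | ⟨hp1, hp2⟩ | ⟨hp1, hp1', hp2, hp3, hp4⟩ <;>
      rcases hclass q hq with ⟨hq1, hq2⟩ | ⟨hq1, hq2⟩ | ⟨hq1, hq1', hq2, hq3, hq4⟩
    · omega
    · rw [hp2, hq2] at hpq; exact absurd hpq (ne_of_lt hij)
    · rw [hp2] at hpq; exact absurd hpq (ne_of_lt hq3)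
    · rw [hp2, hq2] at hpq; exact absurd hpq.symm (ne_of_lt hij)
    · omega
    · rw [hp2] at hpq; exact absurd hpq.symm (ne_of_lt hq4)
    · rw [hq2] at hpq; exact absurd hpq.symm (ne_of_lt hp3)
    · rw [hq2] at hpq; exact absurd hpq (ne_of_lt hp4)
    · rw [hp2, hq2] at hpq
      have := hinj (a + p) (a + q) (by omega) (by omega) hpq
      omega
  have hgS : ∀ m, m ≤ L → g m ∉ S := by
    intro m hm
    rcases hclass m hm with ⟨_, h2⟩ | ⟨_, h2⟩ | ⟨h1, hmL, h2, h3, h4⟩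
    · rw [h2]; exact hnotS vi le_rfl hij.le (hv0 ▸ hS'all 0 (by omega))
    · rw [h2]; exact hnotS vj hij.le le_rfl (hvn ▸ hS'all n le_rfl)
    · rw [h2]; rw [h2] at h3 h4
      exact hnotS _ h3.le h4.le (hS'all (a + m) (by omega))
  -- the key edge lemma
  have hkey : ∀ i, i < L → G.E s(g i, g (i + 1)) (tfun (a + i)) := by
    intro i hi
    have he := (hedge' (a + i) (by omega)).1
    have hstep : G.E s(g i, vfun (a + i + 1)) (tfun (a + i)) := by
      rcases Nat.eq_zero_or_pos i with h0 | h0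
      · subst h0
        simp only [Nat.add_zero] at he ⊢
        rw [hg0]
        exact hsand1 _ _ _ haP (ha_gt (a + 1) (by omega) (by omega)) he
      · rw [hgmid i h0 (by omega)]
        exact he
    have hglt : g i < vj := by
      rcases Nat.eq_zero_or_pos i with h0 | h0
      · rw [h0, hg0]; exact hij
      · rw [hgmid i h0 (by omega)]; exact hb_min _ (by omega) (by omega)
    rcases Nat.lt_or_ge (i + 1) L with hiL | hiL
    · rw [hgmid (i + 1) (by omega) hiL]; exact hstep
    · have hEqb : a + i + 1 = b := by omega
      rw [hEqb] at hstep
      rw [show i + 1 = L by omega, hgL]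
      exact hsand2 _ _ _ hglt hbP hstep
  -- assemble the new temporal path
  refine ⟨List.ofFn (fun m : Fin (L + 1) => g m), List.ofFn (fun m : Fin L => tfun (a + m)),
    ?_, ?_, ?_, ?_, ?_, ?_⟩
  · simp
  · rw [List.nodup_ofFn]
    intro p q hpq
    exact Fin.ext (hginj p q (by omega) (by omega) hpq)
  · rw [List.ofFn_succ]
    simp [hg0]
  · rw [List.getLast?_eq_getElem?]
    simp only [List.length_ofFn, Nat.add_sub_cancel, List.getElem?_ofFn]
    rw [dif_pos (by omega)]
    simp [hgL]
  · apply List.isChain_iff_getElem.mpr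
    intro i hi
    simp only [List.length_ofFn] at hi
    simp only [List.getElem_ofFn]
    show tfun (a + i) ≤ tfun (a + (i + 1))
    rw [show a + (i + 1) = a + i + 1 by omega]
    exact hchain' (a + i) (by omega)
  · intro i hts hvs
    simp only [List.length_ofFn] at hts hvs
    simp only [List.get_ofFn, Fin.cast, Fin.coe_cast]
    show (G.del S).E s(g i, g (i + 1)) (tfun (a + i))
    refine ⟨hkey i (by omega), ?_⟩
    intro v hv
    rw [Sym2.mem_iff] at hv
    rcases hv with rfl | rfl
    · exact hgS i (by omega)
    · exact hgS (i + 1) (by omega)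
end

section
/- Let G = (V, E, τ) be an order-preserving temporal unit interval graph with compatible order <_V, and let v_{i'} ≤_V v_i <_V v_j ≤_V v_{j'}. Then every temporal (v_i, v_j)-separator in G is also a temporal (v_{i'}, v_{j'})-separator in G. -/
/-! A temporal path from `v_{i'} ≤ v_i` to `v_{j'} ≥ v_j` avoiding `S` can be rerouted into a
strictly increasing one (hence without repeated vertices) from `v_i` to `v_j` that uses a
subsequence of its time labels. Follow the path and keep
a current endpoint `x` (initially `v_i`). When the next edge `{u, w}` satisfies `u ≤ x < w`, the
sandwich property of its layer gives the edge `{x, min w v_j}` at the same time: if `w ≥ v_j` it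
finishes the new path, otherwise `w` becomes the new endpoint. Edges with `w ≤ x` are skipped. -/

namespace TemporalGraph

variable {V : Type*}

/-- `G.TempWalk t s z vs ts`: a temporal walk from `s` to `z` through the vertices `vs` with
labels `ts`, none of them earlier than `t`. -/
inductive TempWalk (G : TemporalGraph V) : ℕ → V → V → List V → List ℕ → Prop
  | single (t : ℕ) (v : V) : TempWalk G t v v [v] []
  | cons {t t' : ℕ} {u v z : V} {vs : List V} {ts : List ℕ} :
      t ≤ t' → G.E s(u, v) t' → TempWalk G t' v z vs ts → TempWalk G t u z (u :: vs) (t' :: ts)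

namespace TempWalk

variable {G : TemporalGraph V} {t : ℕ} {s z : V} {vs : List V} {ts : List ℕ}

theorem exists_eq_cons (hw : G.TempWalk t s z vs ts) : ∃ l, vs = s :: l := by
  cases hw <;> exact ⟨_, rfl⟩

theorem mono {t₀ : ℕ} (h : t₀ ≤ t) (hw : G.TempWalk t s z vs ts) : G.TempWalk t₀ s z vs ts := by
  cases hw with
  | single => exact single _ _
  | cons ht he hw => exact cons (h.trans ht) he hw

theorem length_eq (hw : G.TempWalk t s z vs ts) : vs.length = ts.length + 1 := by
  induction hw with
  | single => rfl
  | cons _ _ _ ih => simp [ih]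

theorem getLast?_eq (hw : G.TempWalk t s z vs ts) : vs.getLast? = some z := by
  induction hw with
  | single => rfl
  | cons _ _ hw ih =>
    obtain ⟨l, rfl⟩ := hw.exists_eq_cons
    rwa [List.getLast?_cons_cons]

theorem isChain (hw : G.TempWalk t s z vs ts) : (t :: ts).IsChain (· ≤ ·) := by
  induction hw with
  | single => exact List.isChain_singleton _
  | cons ht _ _ ih => exact List.isChain_cons_cons.2 ⟨ht, ih⟩

theorem E_get (hw : G.TempWalk t s z vs ts) (i : ℕ) (hts : i < ts.length)
    (hvs : i + 1 < vs.length) :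
    G.E s(vs.get ⟨i, Nat.lt_of_succ_lt hvs⟩, vs.get ⟨i + 1, hvs⟩) (ts.get ⟨i, hts⟩) := by
  induction hw generalizing i with
  | single => simp at hts
  | cons _ he hw ih =>
    obtain ⟨l, rfl⟩ := hw.exists_eq_cons
    cases i with
    | zero => exact he
    | succ i => exact ih i (by simpa using hts) (by simpa using hvs)

end TempWalk

theorem tempWalk_of_forall_E {G : TemporalGraph V} {z : V} :
    ∀ {vs : List V} {s : V} {ts : List ℕ} {t : ℕ},
      vs.length = ts.length + 1 → vs.head? = some s → vs.getLast? = some z →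
      (t :: ts).IsChain (· ≤ ·) →
      (∀ (i : ℕ) (hts : i < ts.length) (hvs : i + 1 < vs.length),
        G.E s(vs.get ⟨i, Nat.lt_of_succ_lt hvs⟩, vs.get ⟨i + 1, hvs⟩) (ts.get ⟨i, hts⟩)) →
      G.TempWalk t s z vs ts
  | [], _, _, _, _, hs, _, _, _ => by simp at hs
  | [a], _, ts, t, hlen, hs, hz, _, _ => by
    obtain rfl : ts = [] := List.eq_nil_of_length_eq_zero (by simpa using hlen.symm)
    obtain rfl := Option.some_injective _ hs
    obtain rfl := Option.some_injective _ hz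
    exact .single t a
  | a :: b :: vs, _, [], _, hlen, _, _, _, _ => by simp at hlen
  | a :: b :: vs, _, t' :: ts, _, hlen, hs, hz, hc, hE => by
    obtain rfl := Option.some_injective _ hs
    obtain ⟨ht, hc⟩ := List.isChain_cons_cons.1 hc
    refine .cons ht (hE 0 (by simp) (by simp)) (tempWalk_of_forall_E (by simpa using hlen) rfl
      (by rwa [List.getLast?_cons_cons] at hz) hc fun i hts hvs => ?_)
    simpa using hE (i + 1) (by simpa using hts) (by simpa using hvs)

theorem isTempPath_iff_tempWalk {G : TemporalGraph V} {s z : V} {vs : List V} {ts : List ℕ} :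
    G.IsTempPath s z vs ts ↔ G.TempWalk 0 s z vs ts ∧ vs.Nodup := by
  constructor
  · rintro ⟨hlen, hnd, hs, hz, hc, hE⟩
    exact ⟨tempWalk_of_forall_E hlen hs hz (hc.cons fun _ _ => Nat.zero_le _) hE, hnd⟩
  · rintro ⟨hw, hnd⟩
    obtain ⟨l, rfl⟩ := hw.exists_eq_cons
    exact ⟨hw.length_eq, hnd, rfl, hw.getLast?_eq, hw.isChain.tail, hw.E_get⟩

theorem del_E_mk {G : TemporalGraph V} {S : Set V} {a b : V} {t : ℕ} :
    (G.del S).E s(a, b) t ↔ G.E s(a, b) t ∧ a ∉ S ∧ b ∉ S := by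
  simp [del]

theorem TempWalk.notMem_of_del {G : TemporalGraph V} {S : Set V} {t : ℕ} {s z : V}
    {vs : List V} {ts : List ℕ} (hw : (G.del S).TempWalk t s z vs ts) (hs : s ∉ S) :
    ∀ v ∈ vs, v ∉ S := by
  induction hw with
  | single => simpa using hs
  | cons _ he _ ih =>
    simpa [hs] using ih (del_E_mk.1 he).2.2

section OPUI

variable [LinearOrder V] {G : TemporalGraph V} {W : Set V}

theorem OPUI.E_of_le_of_le (hG : OPUI G W) {t : ℕ} {u a b x : V} (hu : u ∈ W) (ha : a ∈ W)
    (hb : b ∈ W) (hx : x ∈ W) (he : G.E s(u, x) t) (hua : u ≤ a) (hab : a < b)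
    (hbx : b ≤ x) : G.E s(a, b) t := by
  have hax : G.E s(a, x) t := by
    rcases hua.eq_or_lt with rfl | hua
    · exact he
    · exact (hG t u hu a ha x hx hua (hab.trans_le hbx) he).1
  rcases hbx.eq_or_lt with rfl | hbx
  · exact hax
  · exact (hG t a ha b hb x hx hab hbx hax).2

theorem OPUI.del (hG : OPUI G W) (S : Set V) : OPUI (G.del S) (W \ S) := by
  intro t u hu v hv x hx huv hvx he
  obtain ⟨hvx', huv'⟩ := hG t u hu.1 v hv.1 x hx.1 huv hvx (del_E_mk.1 he).1
  exact ⟨del_E_mk.2 ⟨hvx', hv.2, hx.2⟩, del_E_mk.2 ⟨huv', hu.2, hv.2⟩⟩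

theorem OPUI.exists_increasing_tempWalk (hG : OPUI G W) {t : ℕ} {a b : V} {vs : List V}
    {ts : List ℕ} (hw : G.TempWalk t a b vs ts) (hvs : ∀ v ∈ vs, v ∈ W) {x y : V}
    (hx : x ∈ W) (hy : y ∈ W) (hax : a ≤ x) (hxy : x < y) (hyb : y ≤ b) :
    ∃ vs' ts', G.TempWalk t x y vs' ts' ∧ vs'.Pairwise (· < ·) := by
  induction hw generalizing x with
  | single => exact absurd (hyb.trans hax) hxy.not_ge
  | @cons t t' u v z vs ts ht he hw ih =>
    have hvsW : ∀ w ∈ vs, w ∈ W := fun w hw => hvs w (List.mem_cons_of_mem u hw)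
    have hu : u ∈ W := hvs u List.mem_cons_self
    have hv : v ∈ W := by
      obtain ⟨l, rfl⟩ := hw.exists_eq_cons
      exact hvsW v List.mem_cons_self
    rcases le_or_gt v x with hvx | hxv
    · obtain ⟨vs', ts', hw', hinc⟩ := ih hvsW hx hvx hxy hyb
      exact ⟨vs', ts', hw'.mono ht, hinc⟩
    rcases le_or_gt y v with hyv | hvy
    · exact ⟨[x, y], [t'], .cons ht (hG.E_of_le_of_le hu hx hy hv he hax hxy hyv) (.single t' y),
        by simpa using hxy⟩
    · obtain ⟨vs', ts', hw', hinc⟩ := ih hvsW hv le_rfl hvy hyb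
      obtain ⟨l, rfl⟩ := hw'.exists_eq_cons
      refine ⟨x :: v :: l, t' :: ts', .cons ht (hG.E_of_le_of_le hu hx hv hv he hax hxv le_rfl) hw',
        List.pairwise_cons.2 ⟨?_, hinc⟩⟩
      simp only [List.mem_cons, forall_eq_or_imp]
      exact ⟨hxv, fun w hw => hxv.trans (List.rel_of_pairwise_cons hinc hw)⟩

end OPUI

end TemporalGraph

open TemporalGraph in
theorem sep_extends_outward_general {V : Type*} [LinearOrder V] (G : TemporalGraph V)
    (hG : OPUI G Set.univ) (vi vj vi' vj' : V)
    (hii : vi' ≤ vi) (hij : vi < vj) (hjj : vj ≤ vj') (S : Set V)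
    (hvi : vi ∉ S) (hvj : vj ∉ S) (hvi' : vi' ∉ S)
    (h : G.IsSep vi vj S) :
    G.IsSep vi' vj' S := by
  rintro ⟨vs, ts, hpath⟩
  obtain ⟨hw, -⟩ := isTempPath_iff_tempWalk.1 hpath
  obtain ⟨vs', ts', hw', hinc⟩ := (hG.del S).exists_increasing_tempWalk hw
    (fun v hv => ⟨trivial, hw.notMem_of_del hvi' v hv⟩) ⟨trivial, hvi⟩ ⟨trivial, hvj⟩ hii hij hjj
  exact h ⟨vs', ts', isTempPath_iff_tempWalk.2 ⟨hw', hinc.nodup⟩⟩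

open TemporalGraph in
/-- in an order-preserving temporal unit interval graph, a
temporal `(v_i, v_j)`-separator is also a temporal `(v_{i'}, v_{j'})`-separator
whenever `v_{i'} ≤ v_i < v_j ≤ v_{j'}`. -/
theorem sep_extends_outward {V : Type*} [LinearOrder V] (G : TemporalGraph V)
    (hG : OPUI G Set.univ) (vi vj vi' vj' : V)
    (hii : vi' ≤ vi) (hij : vi < vj) (hjj : vj ≤ vj') (S : Set V)
    (hvi : vi ∉ S) (hvj : vj ∉ S) (hvi' : vi' ∉ S) (hvj' : vj' ∉ S)
    (h : G.IsSep vi vj S) :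
    G.IsSep vi' vj' S :=
  sep_extends_outward_general G hG vi vj vi' vj' hii hij hjj S hvi hvj hvi' h
end

section
/- Let G = (V, E, τ) be an order-preserving temporal unit interval graph with compatible order <_V, let S ⊆ V \ {s,z}, let v_i be the largest vertex reachable from s in G − S (w.r.t. <_V), let t be the earliest time at which v_i is reachable from s in G − S, and let t' with t ≤ t' ≤ τ. Then every vertex w with v_i <_V w that is a neighbor of v_i in layer G_{t'} belongs to S. -/
namespace TemporalGraph

variable {V : Type*}

/-- A prefix of a temporal path is a temporal path. -/
lemma prefix_path (G : TemporalGraph V) {s z : V} {vs : List V} {ts : List ℕ}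
    (h : G.IsTempPath s z vs ts) (k : ℕ) (hk : k < vs.length) :
    G.IsTempPath s vs[k] (vs.take (k + 1)) (ts.take k) := by
  obtain ⟨hlen, hnd, hhead, hlast, hchain, hedge⟩ := h
  have hk' : k ≤ ts.length := by omega
  have hlen1 : (vs.take (k + 1)).length = k + 1 := by
    simp [List.length_take]; omega
  have hlen2 : (ts.take k).length = k := by
    simp [List.length_take]; omega
  refine ⟨by omega, hnd.sublist (List.take_sublist _ _), ?_, ?_, hchain.take _, ?_⟩
  · rw [List.head?_take]; simpa using hhead
  · rw [List.getLast?_eq_getElem?, hlen1]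
    simp only [Nat.add_sub_cancel]
    rw [List.getElem?_eq_getElem (by omega)]
    congr 1
    exact List.getElem_take
  · intro i hts hvs
    have hi : i < k := by omega
    have h1 : i < ts.length := by omega
    have h2 : i + 1 < vs.length := by omega
    have := hedge i h1 h2
    simp only [List.get_eq_getElem] at this ⊢
    simpa only [List.getElem_take] using this

/-- Every vertex on a temporal path in `G − S` starting at `s ∉ S` avoids `S`. -/
lemma path_avoids (G : TemporalGraph V) {s z : V} {S : Set V} (hs : s ∉ S)
    {vs : List V} {ts : List ℕ} (h : (G.del S).IsTempPath s z vs ts) :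
    z ∉ S := by
  obtain ⟨hlen, hnd, hhead, hlast, hchain, hedge⟩ := h
  rcases Nat.eq_zero_or_pos ts.length with h0 | h0
  · -- vs = [s] = [z]
    have hv1 : vs.length = 1 := by omega
    have h01 : 0 < vs.length := by omega
    have hz : vs[0] = z := by
      rw [List.getLast?_eq_getElem?, hv1] at hlast
      rw [List.getElem?_eq_getElem (by omega)] at hlast
      simpa using hlast
    have hsv : vs[0] = s := by
      rw [List.head?_eq_getElem?] at hhead
      rw [List.getElem?_eq_getElem h01] at hhead
      simpa using hhead
    rw [← hz, hsv]; exact hs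
  · have h1 : ts.length - 1 < ts.length := by omega
    have h2 : ts.length - 1 + 1 < vs.length := by omega
    have := hedge (ts.length - 1) h1 h2
    have hz : vs[ts.length - 1 + 1]'h2 = z := by
      rw [List.getLast?_eq_getElem?] at hlast
      have : vs.length - 1 = ts.length - 1 + 1 := by omega
      rw [this, List.getElem?_eq_getElem h2] at hlast
      simpa using hlast
    have hnotin := this.2
    rw [← hz]
    exact hnotin _ (by simp [List.get_eq_getElem])

end TemporalGraph

open TemporalGraph in
/-- let `v_i` be the largest vertex reachable from `s` in `G − S`,
`t` the earliest time at which `v_i` is reachable, and `t ≤ t' ≤ τ`. Then every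
neighbor of `v_i` in layer `t'` that is larger than `v_i` belongs to `S`. -/
theorem larger_neighbors_in_sep {V : Type*} [LinearOrder V] (G : TemporalGraph V)
    (hG : OPUI G Set.univ) (s : V) (S : Set V) (hs : s ∉ S) (vi : V)
    (hvi : (G.del S).Reach s vi)
    (hvimax : ∀ w, (G.del S).Reach s w → w ≤ vi)
    (t : ℕ) (ht : (G.del S).ReachBy s vi t)
    (htmin : ∀ t'', (G.del S).ReachBy s vi t'' → t ≤ t'')
    (t' : ℕ) (ht'1 : t ≤ t') (ht'2 : t' ≤ G.tau) :
    ∀ w, vi < w → G.E s(vi, w) t' → w ∈ S := by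
  intro w hw hE
  by_contra hwS
  obtain ⟨vs, ts, hpath, hle⟩ := ht
  obtain ⟨hlen, hnd, hhead, hlast, hchain, hedge⟩ := hpath
  have hvi_not : vi ∉ S := G.path_avoids hs ⟨hlen, hnd, hhead, hlast, hchain, hedge⟩
  -- w is not on the path
  have hwvs : w ∉ vs := by
    intro hmem
    obtain ⟨⟨k, hk⟩, hvk⟩ := List.mem_iff_get.mp hmem
    have hpp := (G.del S).prefix_path ⟨hlen, hnd, hhead, hlast, hchain, hedge⟩ k hk
    simp only [List.get_eq_getElem] at hvk
    rw [hvk] at hpp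
    have : (G.del S).Reach s w := ⟨_, _, hpp⟩
    have := hvimax w this
    exact absurd hw (not_lt.mpr this)
  -- the last vertex of vs is vi
  have hvsne : vs ≠ [] := by intro h; rw [h] at hhead; simp at hhead
  have hlastvi : vs[vs.length - 1]'(by
      have := List.length_pos_iff.mpr hvsne; omega) = vi := by
    rw [List.getLast?_eq_getElem?] at hlast
    rw [List.getElem?_eq_getElem (by have := List.length_pos_iff.mpr hvsne; omega)] at hlast
    simpa using hlast
  -- build the extended path
  have hreach : (G.del S).Reach s w := by
    refine ⟨vs ++ [w], ts ++ [t'], ?_, ?_, ?_, ?_, ?_, ?_⟩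
    · simp [hlen]
    · simpa [List.nodup_append] using ⟨hnd, fun a ha h => hwvs (h ▸ ha)⟩
    · rw [List.head?_append_of_ne_nil _ hvsne]; exact hhead
    · exact List.getLast?_concat
    · show List.IsChain _ _
      rw [List.isChain_append]
      refine ⟨hchain, List.isChain_singleton _, ?_⟩
      intro x hx y hy
      simp at hy
      subst hy
      exact le_trans (hle x (List.mem_of_mem_getLast? hx)) ht'1
    · intro i hts hvs'
      simp only [List.length_append, List.length_singleton] at hts
      simp only [List.get_eq_getElem]
      rcases Nat.lt_or_ge i ts.length with hi | hi
      · have h2 : i + 1 < vs.length := by omega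
        have := hedge i hi h2
        simp only [List.get_eq_getElem] at this
        rw [List.getElem_append_left (by omega), List.getElem_append_left h2,
          List.getElem_append_left hi]
        exact this
      · have hieq : i = ts.length := by omega
        subst hieq
        rw [List.getElem_append_left (by omega : ts.length < vs.length),
          List.getElem_append_right (by omega : vs.length ≤ ts.length + 1),
          List.getElem_append_right (le_refl ts.length)]
        have h1 : vs[ts.length]'(by omega) = vi := by
          have : vs.length - 1 = ts.length := by omega
          rw [← hlastvi]; congr 1; omega
        rw [h1]
        simp only [Nat.sub_self, List.getElem_singleton]
        refine ⟨hE, ?_⟩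
        intro v hv
        rw [Sym2.mem_iff] at hv
        rcases hv with rfl | rfl
        · exact hvi_not
        · exact hwS
  exact absurd (hvimax w hreach) (not_le.mpr hw)
end

section
/- Let G = (V, E, τ) be a p-periodic temporal graph, G = (G')^r with G' = (V, E', p), such that the number of periods r is at least the distance to temporality from s to z in G'. Then every (s,z)-path in the underlying graph of G gives rise to a temporal (s,z)-path in G; consequently S ⊆ V \ {s,z} is a temporal (s,z)-separator in G if and only if S is an (s,z)-separator in the underlying graph of G. -/
namespace TemporalGraph

variable {V : Type*}

lemma pow_tau_s15 (G' : TemporalGraph V) : ∀ n, (pow G' n).tau = n * G'.tau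
  | 0 => (Nat.zero_mul _).symm
  | n + 1 => by
      show (pow G' n).tau + G'.tau = (n + 1) * G'.tau
      rw [pow_tau_s15 G' n]; ring

lemma pow_E_shift (G' : TemporalGraph V) :
    ∀ (n k : ℕ), k < n → ∀ e t, G'.E e t → (pow G' n).E e (t + k * G'.tau) := by
  intro n
  induction n with
  | zero => omega
  | succ n ih =>
    intro k hk e t ht
    by_cases h : k < n
    · exact Or.inl (ih k h e t ht)
    · have hk' : k = n := by omega
      have hv := G'.valid e t ht
      rw [hk']
      refine Or.inr ⟨?_, ?_⟩
      · rw [pow_tau_s15 G' n]; omega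
      · have h3 : t + n * G'.tau - (pow G' n).tau = t := by rw [pow_tau_s15 G' n]; omega
        rw [h3]; exact ht

lemma pow_E_elim (G' : TemporalGraph V) :
    ∀ n e t, (pow G' n).E e t → ∃ t', G'.E e t'
  | 0, _, _, h => h.elim
  | n + 1, e, t, h => h.elim (pow_E_elim G' n e t) (fun h' => ⟨_, h'.2⟩)

/-- Lift a list of labels in `[1, τ]` to a nondecreasing list by shifting each
entry by `τ` times the number of descents seen so far (starting at `k`). -/
def lift (τ : ℕ) : ℕ → List ℕ → List ℕ
  | _, [] => []
  | k, [a] => [a + k * τ]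
  | k, a :: b :: l => (a + k * τ) :: lift τ (if b < a then k + 1 else k) (b :: l)

lemma lift_length (τ : ℕ) : ∀ (ts : List ℕ) (k : ℕ), (lift τ k ts).length = ts.length := by
  intro ts
  induction ts with
  | nil => intro k; rfl
  | cons a l ih =>
    intro k
    cases l with
    | nil => rfl
    | cons b m => simp only [lift, List.length_cons, ih]

lemma lift_head? (τ k a : ℕ) (l : List ℕ) :
    (lift τ k (a :: l)).head? = some (a + k * τ) := by
  cases l <;> rfl

lemma lift_chain (τ : ℕ) : ∀ (ts : List ℕ) (k : ℕ), (∀ x ∈ ts, x ≤ τ) →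
    List.Chain' (· ≤ ·) (lift τ k ts) := by
  intro ts
  induction ts with
  | nil => intro k _; exact List.isChain_nil
  | cons a l ih =>
    intro k hb
    cases l with
    | nil => exact List.isChain_singleton _
    | cons b m =>
      show List.Chain' (· ≤ ·) ((a + k * τ) :: lift τ (if b < a then k + 1 else k) (b :: m))
      unfold List.Chain'
      rw [List.isChain_cons]
      refine ⟨?_, ih _ (fun x hx => hb x (List.mem_cons_of_mem a hx))⟩
      intro y hy
      rw [lift_head? τ _ b m] at hy
      have ha : a ≤ τ := hb a (List.mem_cons_self (a := a))
      cases Option.some_inj.mp hy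
      by_cases hba : b < a
      · simp only [if_pos hba]; nlinarith
      · simp only [if_neg hba]; omega

lemma lift_get (τ : ℕ) : ∀ (ts : List ℕ) (k i : ℕ) (h : i < ts.length),
    ∃ m, k ≤ m ∧ m ≤ k + descents ts ∧
      (lift τ k ts).get ⟨i, by rw [lift_length]; exact h⟩ = ts.get ⟨i, h⟩ + m * τ := by
  intro ts
  induction ts with
  | nil => intro k i h; simp at h
  | cons a l ih =>
    intro k i h
    cases l with
    | nil =>
      cases i with
      | zero => exact ⟨k, le_refl k, Nat.le_add_right _ _, rfl⟩
      | succ j => simp at h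
    | cons b m =>
      cases i with
      | zero => exact ⟨k, le_refl k, Nat.le_add_right _ _, rfl⟩
      | succ j =>
        have hj : j < (b :: m).length := by simpa using h
        obtain ⟨m₀, h1, h2, h3⟩ := ih (if b < a then k + 1 else k) j hj
        refine ⟨m₀, ?_, ?_, ?_⟩
        · by_cases hba : b < a
          · rw [if_pos hba] at h1; omega
          · rwa [if_neg hba] at h1
        · show m₀ ≤ k + descents (a :: b :: m)
          rw [descents]
          by_cases hba : b < a
          · rw [if_pos hba] at h2 ⊢; omega
          · rw [if_neg hba] at h2 ⊢; omega
        · exact h3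

lemma edges_get_eq {G : SimpleGraph V} {u v : V} (p : G.Walk u v) :
    ∀ (i : ℕ) (h1 : i < p.edges.length) (h2 : i + 1 < p.support.length),
    p.edges.get ⟨i, h1⟩ =
      s(p.support.get ⟨i, Nat.lt_of_succ_lt h2⟩, p.support.get ⟨i + 1, h2⟩) := by
  induction p with
  | nil => intro i h1 h2; simp at h1
  | @cons u w v h q ih =>
    intro i h1 h2
    cases i with
    | zero =>
      have h0 : 0 < q.support.length := by simp [q.length_support]
      have hw : q.support.get ⟨0, h0⟩ = w := by
        have := List.get_of_eq q.support_eq_cons ⟨0, h0⟩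
        simpa using this
      simp only [SimpleGraph.Walk.edges_cons, SimpleGraph.Walk.support_cons, List.get]
      exact congrArg (fun x => s(u, x)) hw.symm
    | succ j =>
      have h1' : j < q.edges.length := by simpa using h1
      have h2' : j + 1 < q.support.length := by simpa using h2
      simpa using ih j h1' h2'

lemma walk_of_chain {G : SimpleGraph V} :
    ∀ (vs : List V) (s z : V), vs.head? = some s → vs.getLast? = some z →
      List.Chain' G.Adj vs → ∃ p : G.Walk s z, p.support = vs := by
  intro vs
  induction vs with
  | nil => intro s z h; simp at h
  | cons a l ih =>
    intro s z hh hl hc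
    have has : a = s := by simpa using hh
    subst has
    cases l with
    | nil =>
      have : a = z := by simpa using hl
      subst this
      exact ⟨SimpleGraph.Walk.nil, rfl⟩
    | cons b m =>
      rw [List.getLast?_cons_cons] at hl
      obtain ⟨hadj, hc'⟩ := List.isChain_cons_cons.mp hc
      obtain ⟨q, hq⟩ := ih b z rfl hl hc'
      exact ⟨SimpleGraph.Walk.cons hadj q, by simp [hq]⟩

end TemporalGraph

open TemporalGraph in
/-- if `G = (G')^r` is periodic and the number `r` of periods is
at least the distance to temporality from `s` to `z` in `G'` (every static
`(s,z)`-path has a realization whose label sequence has at most `r` monotone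
intervals), then every `(s,z)`-path of the underlying graph lifts to a temporal
`(s,z)`-path of `G`, and temporal `(s,z)`-separators of `G` coincide with
static `(s,z)`-separators of the underlying graph. -/
theorem periodic_sep_iff_static {V : Type*} (G' : TemporalGraph V) (r : ℕ)
    (hr : 1 ≤ r) (s z : V) (hsz : s ≠ z)
    (hdist : ∀ p : G'.underlying.Walk s z, p.IsPath →
      ∃ ts : List ℕ, ts.length = p.edges.length ∧
        (∀ (i : ℕ) (h1 : i < ts.length) (h2 : i < p.edges.length),
          G'.E (p.edges.get ⟨i, h2⟩) (ts.get ⟨i, h1⟩)) ∧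
        TemporalGraph.descents ts + 1 ≤ r) :
    (∀ p : (TemporalGraph.pow G' r).underlying.Walk s z, p.IsPath →
        ∃ ts, (TemporalGraph.pow G' r).IsTempPath s z p.support ts) ∧
    (∀ S : Set V, s ∉ S → z ∉ S →
      ((TemporalGraph.pow G' r).IsSep s z S ↔
        ¬ ∃ p : (TemporalGraph.pow G' r).underlying.Walk s z,
            p.IsPath ∧ ∀ v ∈ p.support, v ∉ S)) := by
  have part1 : ∀ p : (TemporalGraph.pow G' r).underlying.Walk s z, p.IsPath →
      ∃ ts, (TemporalGraph.pow G' r).IsTempPath s z p.support ts := by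
    intro p hp
    have hsub : ∀ e ∈ p.edges, e ∈ G'.underlying.edgeSet := by
      intro e he
      have hmem := p.edges_subset_edgeSet he
      induction e using Sym2.ind with
      | _ a b =>
        rw [SimpleGraph.mem_edgeSet] at hmem ⊢
        obtain ⟨hne, t, ht⟩ := hmem
        exact ⟨hne, pow_E_elim G' r _ t ht⟩
    have hqp : (p.transfer G'.underlying hsub).IsPath := hp.transfer hsub
    obtain ⟨ts, hlen, hedge, hdesc⟩ := hdist (p.transfer G'.underlying hsub) hqp
    have hqe := p.edges_transfer hsub
    have hbound : ∀ x ∈ ts, 1 ≤ x ∧ x ≤ G'.tau := by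
      intro x hx
      obtain ⟨⟨i, hi⟩, hget⟩ := List.mem_iff_get.mp hx
      have hE' := hedge i hi (hlen ▸ hi)
      have := G'.valid _ _ hE'
      rw [hget] at this
      exact this
    refine ⟨lift G'.tau 0 ts, ?_, hp.support_nodup, ?_, ?_, ?_, ?_⟩
    · rw [lift_length, hlen, hqe, p.length_edges, p.length_support]
    · rw [p.support_eq_cons]; rfl
    · rw [List.getLast?_eq_getLast_of_ne_nil p.support_ne_nil]
      exact congrArg some p.getLast_support
    · exact lift_chain G'.tau ts 0 (fun x hx => (hbound x hx).2)
    · intro i hts hvs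
      have hits : i < ts.length := by rwa [lift_length] at hts
      have hie : i < p.edges.length := by rw [← hqe, ← hlen]; exact hits
      obtain ⟨m, hm0, hm1, hmg⟩ := lift_get G'.tau ts 0 i hits
      have hmr : m < r := by omega
      have hgoal : (lift G'.tau 0 ts).get ⟨i, hts⟩ = ts.get ⟨i, hits⟩ + m * G'.tau := hmg
      rw [hgoal]
      have hkey : (p.transfer G'.underlying hsub).edges.get ⟨i, hlen ▸ hits⟩ =
          s(p.support.get ⟨i, Nat.lt_of_succ_lt hvs⟩, p.support.get ⟨i + 1, hvs⟩) := by
        rw [List.get_of_eq hqe]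
        exact edges_get_eq p i hie hvs
      have hE' := hedge i hits (hlen ▸ hits)
      rw [hkey] at hE'
      exact pow_E_shift G' r m hmr _ _ hE'
  refine ⟨part1, ?_⟩
  intro S hs hz
  constructor
  · intro hsep
    rintro ⟨p, hp, hS⟩
    obtain ⟨ts, h1, h2, h3, h4, h5, h6⟩ := part1 p hp
    refine hsep ⟨p.support, ts, h1, h2, h3, h4, h5, fun i hts hvs => ⟨h6 i hts hvs, ?_⟩⟩
    intro v hv
    rw [Sym2.mem_iff] at hv
    rcases hv with h | h <;> subst h <;> exact hS _ (List.get_mem _ _)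
  · intro hns
    rintro ⟨vs, ts, hlen, hnd, hhd, hlast, hch, hE⟩
    apply hns
    have hts1 : 1 ≤ ts.length := by
      rcases ts with _ | ⟨t0, ts'⟩
      · exfalso
        rcases vs with _ | ⟨a, _ | ⟨b, m⟩⟩ <;> simp_all
      · simp
    have hchain : List.Chain' (TemporalGraph.pow G' r).underlying.Adj vs := by
      unfold List.Chain'
      rw [List.isChain_iff_getElem]
      intro i h
      have h2 : i + 1 < vs.length := by omega
      have h1 : i < ts.length := by omega
      have he := hE i h1 h2
      refine ⟨?_, ⟨_, he.1⟩⟩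
      intro heq
      have : (⟨i, Nat.lt_of_succ_lt h2⟩ : Fin vs.length) = ⟨i + 1, h2⟩ :=
        hnd.get_inj_iff.mp heq
      simp [Fin.ext_iff] at this
    obtain ⟨p, hps⟩ := walk_of_chain vs s z hhd hlast hchain
    refine ⟨p, ?_, ?_⟩
    · rw [SimpleGraph.Walk.isPath_def, hps]; exact hnd
    · intro v hv
      rw [hps] at hv
      obtain ⟨⟨i, hi⟩, hget⟩ := List.mem_iff_get.mp hv
      by_cases hlt : i < ts.length
      · have he := hE i hlt (by omega)
        exact he.2 v (by rw [← hget]; exact Sym2.mem_mk_left _ _)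
      · have hi' : i = ts.length := by omega
        have hi1 : 1 ≤ i := by omega
        have h2' : (i - 1) + 1 < vs.length := by omega
        have he := hE (i - 1) (by omega) h2'
        refine he.2 v ?_
        have hv2 : (⟨i - 1 + 1, h2'⟩ : Fin vs.length) = ⟨i, hi⟩ := Fin.ext (show i - 1 + 1 = i by omega)
        rw [hv2, hget]
        exact Sym2.mem_mk_right _ _
end

section
/- Adding a universal vertex preserves separator structure and makes every aggregate interval connected: let G = (V, E, τ) be a temporal graph with distinct s, z ∈ V, and let G' be obtained from G by adding a new vertex u together with time-edges ({u, w}, t) for all w ∈ V and all t ∈ [τ]. Then (a) for every T ≥ 1 and every t ∈ [τ − T + 1], the static graph on V ∪ {u} with edge set ⋂_{i=t}^{t+T-1} E_i(G') is connected; and (b) for every k, G has a temporal (s,z)-separator of size at most k if and only if G' has a temporal (s,z)-separator of size at most k+1. -/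
namespace TemporalGraph

/-- Add a universal vertex (`none`) joined to every original vertex in every
layer. -/
def addUniversal {V : Type*} (G : TemporalGraph V) : TemporalGraph (Option V) where
  E e t := (∃ v w : V, e = s(some v, some w) ∧ G.E s(v, w) t) ∨
           (∃ w : V, e = s(none, some w) ∧ 1 ≤ t ∧ t ≤ G.tau)
  tau := G.tau
  valid := by
    rintro e t (⟨v, w, _, h⟩ | ⟨w, _, h1, h2⟩)
    · exact G.valid _ _ h
    · exact ⟨h1, h2⟩

lemma addUniversal_some_some {V : Type*} {G : TemporalGraph V} {a b : V} {t : ℕ} :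
    (addUniversal G).E s(some a, some b) t ↔ G.E s(a, b) t := by
  constructor
  · rintro (⟨v, w, he, h⟩ | ⟨w, he, _⟩)
    · rw [Sym2.eq_iff] at he
      rcases he with ⟨h1, h2⟩ | ⟨h1, h2⟩
      · obtain rfl := Option.some_injective _ h1
        obtain rfl := Option.some_injective _ h2
        exact h
      · obtain rfl := Option.some_injective _ h1
        obtain rfl := Option.some_injective _ h2
        rwa [Sym2.eq_swap] at h
    · rw [Sym2.eq_iff] at he
      rcases he with ⟨h1, _⟩ | ⟨_, h1⟩ <;> exact absurd h1 (by simp)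
  · intro h
    exact Or.inl ⟨a, b, rfl, h⟩

/-- Lifting a temporal path along `some`. -/
lemma lift_path {V : Type*} (G : TemporalGraph V) (S' : Set (Option V)) (s z : V)
    (vs : List V) (ts : List ℕ)
    (h : (G.del {v | some v ∈ S'}).IsTempPath s z vs ts) :
    ((addUniversal G).del S').IsTempPath (some s) (some z) (vs.map some) ts := by
  obtain ⟨hlen, hnd, hhead, hlast, hchain, hedge⟩ := h
  refine ⟨by simpa using hlen, hnd.map (Option.some_injective V), ?_, ?_, hchain, ?_⟩
  · rw [List.head?_map, hhead]; rfl
  · rw [List.getLast?_map, hlast]; rfl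
  · intro i hts hvs
    have hvs' : i + 1 < vs.length := by simpa using hvs
    obtain ⟨hE, hmem⟩ := hedge i hts hvs'
    simp only [List.get_eq_getElem, List.getElem_map]
    refine ⟨Or.inl ⟨_, _, rfl, by simpa using hE⟩, ?_⟩
    intro v hv
    rw [Sym2.mem_iff] at hv
    rcases hv with rfl | rfl
    · exact hmem _ (Sym2.mem_mk_left _ _)
    · exact hmem _ (Sym2.mem_mk_right _ _)

/-- Projecting a temporal path of `addUniversal G` avoiding `none` back to `G`. -/
lemma proj_path {V : Type*} (G : TemporalGraph V) (S' : Set (Option V)) (hnone : none ∈ S')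
    (s z : V) (vs : List (Option V)) (ts : List ℕ)
    (h : ((addUniversal G).del S').IsTempPath (some s) (some z) vs ts) :
    ∃ vs', (G.del {v | some v ∈ S'}).IsTempPath s z vs' ts := by
  obtain ⟨hlen, hnd, hhead, hlast, hchain, hedge⟩ := h
  -- every vertex on the path is a `some`
  have hns : ∀ i : ℕ, ∀ hi : i < vs.length, vs[i] ≠ none := by
    intro i hi hcon
    match i with
    | 0 =>
      rcases vs with _ | ⟨a, l⟩
      · simp at hhead
      · simp only [List.head?_cons, Option.some.injEq] at hhead
        simp only [List.getElem_cons_zero] at hcon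
        rw [hcon] at hhead
        cases hhead
    | j + 1 =>
      have hts : j < ts.length := by omega
      obtain ⟨hE, hmem⟩ := hedge j hts (by omega)
      have : (vs.get ⟨j + 1, by omega⟩ : Option V) ∈
          s(vs.get ⟨j, by omega⟩, vs.get ⟨j + 1, by omega⟩) :=
        Sym2.mem_mk_right _ _
      have hnotin := hmem _ this
      apply hnotin
      simp only [List.get_eq_getElem]
      rw [hcon]
      exact hnone
  have hmemne : ∀ o ∈ vs, o ≠ none := by
    intro o ho
    obtain ⟨i, hi, rfl⟩ := List.getElem_of_mem ho
    exact hns i hi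
  classical
  set f : Option V → V := fun o => o.getD s with hf
  have hcomp : vs.map (some ∘ f) = vs := by
    rw [List.map_congr_left (g := id), List.map_id]
    intro o ho
    rcases o with _ | w
    · exact absurd rfl (hmemne _ ho)
    · rfl
  refine ⟨vs.map f, by simpa using hlen, ?_, ?_, ?_, hchain, ?_⟩
  · have : ((vs.map f).map some).Nodup := by
      rw [List.map_map, hcomp]; exact hnd
    exact this.of_map _
  · rw [List.head?_map, hhead]; rfl
  · rw [List.getLast?_map, hlast]; rfl
  · intro i hts hvs
    have hvs' : i + 1 < vs.length := by simpa using hvs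
    obtain ⟨hE, hmem⟩ := hedge i hts hvs'
    simp only [List.get_eq_getElem, List.getElem_map] at *
    have h1 : some (f vs[i]) = vs[i] := by
      rcases hh : vs[i] with _ | w
      · exact absurd hh (hns i (by omega))
      · rfl
    have h2 : some (f vs[i + 1]) = vs[i + 1] := by
      rcases hh : vs[i + 1] with _ | w
      · exact absurd hh (hns (i + 1) (by omega))
      · rfl
    refine ⟨?_, ?_⟩
    · rw [← addUniversal_some_some, h1, h2]; exact hE
    · intro v hv
      rw [Sym2.mem_iff] at hv
      simp only [Set.mem_setOf_eq]
      rcases hv with rfl | rfl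
      · rw [h1]; exact hmem _ (Sym2.mem_mk_left _ _)
      · rw [h2]; exact hmem _ (Sym2.mem_mk_right _ _)

lemma isSep_of_tau_zero {V : Type*} (G : TemporalGraph V) (h0 : G.tau = 0) (s z : V)
    (hsz : s ≠ z) (S : Set V) : G.IsSep s z S := by
  rintro ⟨vs, ts, hlen, hnd, hhead, hlast, hchain, hedge⟩
  match ts with
  | [] =>
    match vs with
    | [] => simp at hhead
    | [a] =>
      simp only [List.head?_cons, Option.some.injEq] at hhead
      simp only [List.getLast?_singleton, Option.some.injEq] at hlast
      exact hsz (hhead ▸ hlast ▸ rfl)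
    | a :: b :: l => simp at hlen
  | t :: ts' =>
    obtain ⟨hE, -⟩ := hedge 0 (by simp) (by simp [hlen])
    have := G.valid _ _ hE
    omega

lemma none_mem_sep {V : Type*} {G : TemporalGraph V} (htau : 1 ≤ G.tau) {s z : V} (hsz : s ≠ z)
    {S' : Set (Option V)} (hsS : some s ∉ S') (hzS : some z ∉ S')
    (hsep : (addUniversal G).IsSep (some s) (some z) S') : none ∈ S' := by
  by_contra hn
  apply hsep
  refine ⟨[some s, none, some z], [1, 1], rfl, by simp [hsz], rfl, rfl, List.isChain_pair.2 le_rfl, ?_⟩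
  intro i hts hvs
  simp only [List.length_cons, List.length_nil] at hts
  interval_cases i
  · refine ⟨Or.inr ⟨s, Sym2.eq_swap, le_refl 1, htau⟩, ?_⟩
    intro v hv
    rw [Sym2.mem_iff] at hv
    rcases hv with rfl | rfl
    · exact hsS
    · exact hn
  · refine ⟨Or.inr ⟨z, rfl, le_refl 1, htau⟩, ?_⟩
    intro v hv
    rw [Sym2.mem_iff] at hv
    rcases hv with rfl | rfl
    · exact hn
    · exact hzS

end TemporalGraph

open TemporalGraph in
/-- adding a universal vertex makes every aggregate interval of
layers connected, and increases the minimum temporal `(s,z)`-separator size by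
exactly one. -/
theorem addUniversal_interval_connected_and_sep {V : Type*} [DecidableEq V]
    (G : TemporalGraph V) (s z : V) (hsz : s ≠ z) (k : ℕ) :
    (∀ T t : ℕ, 1 ≤ T → 1 ≤ t → t + T - 1 ≤ G.tau →
      (SimpleGraph.fromRel (fun x y : Option V =>
        ∀ i, t ≤ i → i ≤ t + T - 1 → (addUniversal G).E s(x, y) i)).Connected) ∧
    ((∃ S : Finset V, s ∉ S ∧ z ∉ S ∧ G.IsSep s z ↑S ∧ S.card ≤ k) ↔
      (∃ S' : Finset (Option V), some s ∉ S' ∧ some z ∉ S' ∧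
        (addUniversal G).IsSep (some s) (some z) ↑S' ∧ S'.card ≤ k + 1)) := by
  constructor
  · -- interval connectivity
    intro T t hT ht htau
    have hadj : ∀ w : V, (SimpleGraph.fromRel (fun x y : Option V =>
        ∀ i, t ≤ i → i ≤ t + T - 1 → (addUniversal G).E s(x, y) i)).Adj none (some w) := by
      intro w
      exact ⟨by simp, Or.inl fun i hi1 hi2 => Or.inr ⟨w, rfl, by omega, by omega⟩⟩
    haveI : Nonempty (Option V) := ⟨none⟩
    refine SimpleGraph.Connected.mk ?_
    intro x y
    have hx : ∀ o : Option V, (SimpleGraph.fromRel (fun x y : Option V =>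
        ∀ i, t ≤ i → i ≤ t + T - 1 → (addUniversal G).E s(x, y) i)).Reachable none o := by
      rintro (_ | w)
      · exact SimpleGraph.Reachable.refl _
      · exact (hadj w).reachable
    exact (hx x).symm.trans (hx y)
  · constructor
    · -- forward
      rintro ⟨S, hs, hz, hsep, hcard⟩
      refine ⟨insert none (S.image some), ?_, ?_, ?_, ?_⟩
      · simp [hs]
      · simp [hz]
      · rintro ⟨vs, ts, hp⟩
        have hnone : (none : Option V) ∈ (↑(insert none (S.image some)) : Set (Option V)) := by
          simp
        obtain ⟨vs', hp'⟩ := proj_path G _ hnone s z vs ts hp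
        apply hsep
        refine ⟨vs', ts, ?_⟩
        have hset : {v : V | some v ∈ (↑(insert none (S.image some)) : Set (Option V))}
            = (↑S : Set V) := by
          ext v; simp
        rwa [hset] at hp'
      · calc (insert none (S.image some)).card ≤ (S.image some).card + 1 :=
              Finset.card_insert_le _ _
          _ = S.card + 1 := by rw [Finset.card_image_of_injective _ (Option.some_injective V)]
          _ ≤ k + 1 := by omega
    · -- backward
      rintro ⟨S', hs', hz', hsep', hcard'⟩
      by_cases h0 : G.tau = 0
      · exact ⟨∅, by simp, by simp, by simpa using isSep_of_tau_zero G h0 s z hsz _, by simp⟩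
      · have htau : 1 ≤ G.tau := by omega
        have hnone : (none : Option V) ∈ S' := by
          have := none_mem_sep htau hsz (by simpa using hs') (by simpa using hz') hsep'
          simpa using this
        refine ⟨S'.preimage some (Set.injOn_of_injective (Option.some_injective V)), ?_, ?_, ?_, ?_⟩
        · simpa [Finset.mem_preimage] using hs'
        · simpa [Finset.mem_preimage] using hz'
        · rintro ⟨vs, ts, hp⟩
          apply hsep'
          refine ⟨vs.map some, ts, ?_⟩
          apply lift_path
          have hset : {v : V | some v ∈ (↑S' : Set (Option V))}
              = (↑(S'.preimage some (Set.injOn_of_injective (Option.some_injective V))) :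
                Set V) := by
            ext v; simp [Finset.mem_preimage]
          rwa [← hset] at hp
        · have himg : (S'.preimage some
              (Set.injOn_of_injective (Option.some_injective V))).image some
              = S'.erase none := by
            ext x
            rcases x with _ | w <;>
              simp [Finset.mem_preimage, Finset.mem_erase]
          have : (S'.preimage some (Set.injOn_of_injective (Option.some_injective V))).card
              = (S'.erase none).card := by
            rw [← himg, Finset.card_image_of_injective _ (Option.some_injective V)]
          rw [this, Finset.card_erase_of_mem hnone]
          omega
end

section
/- Completing the graph late preserves separators: let G = (V, E, τ) be a temporal graph with distinct s, z ∈ V and no time-edge between s and z, and construct G' = (V, E', τ+2) as follows: E' contains (e, t+1) for every (e,t) ∈ E; additionally ({v,w}, 1) for every pair v ≠ w with v,w ∈ V \ {s} and {v,w} not an edge of the underlying graph of G; and ({s,v}, τ+2) for every v ∈ V \ {z} with {s,v} not an edge of the underlying graph of G. Then a set S ⊆ V \ {s,z} is a temporal (s,z)-separator in G if and only if it is one in G'; moreover the underlying graph of G' is the complete graph on V minus the single edge {s,z}. -/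
namespace TemporalGraph

/-- Complete the graph "late": shift all time-edges of `G` by one, add all
missing edges not incident to `s` at time 1, and all missing edges at `s`
(except `{s,z}`) at time `τ + 2`. -/
def completeLate {V : Type*} (G : TemporalGraph V) (s z : V) : TemporalGraph V where
  E e t :=
    (∃ t₀, G.E e t₀ ∧ t = t₀ + 1) ∨
    (t = 1 ∧ ¬ e.IsDiag ∧ s ∉ e ∧ ∀ t₀, ¬ G.E e t₀) ∨
    (t = G.tau + 2 ∧ (∃ v, v ≠ z ∧ v ≠ s ∧ e = s(s, v)) ∧ ∀ t₀, ¬ G.E e t₀)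
  tau := G.tau + 2
  valid := by
    rintro e t (⟨t₀, h, rfl⟩ | ⟨rfl, -⟩ | ⟨rfl, -⟩)
    · have := G.valid e t₀ h; omega
    · omega
    · omega

end TemporalGraph

/-!
In `completeLate G s z` the labels `2, …, τ + 1` carry exactly the shifted edges of `G`. A
temporal `(s,z)`-path cannot use label `1`: its first edge is incident to `s`, and the edges of
label `1` are not. It cannot use label `τ + 2` either: by monotonicity its last edge would then have
that label, but it is incident to `z`, and the edges of label `τ + 2` are not. So shifting labels
by one identifies the temporal `(s,z)`-paths of `G − S` and of `completeLate G s z − S`.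
-/

namespace TemporalGraph

variable {V : Type*} {G H : TemporalGraph V} {s z : V} {vs : List V} {ts : List ℕ}

section IsTempPath

theorem IsTempPath.map (h : G.IsTempPath s z vs ts) {f : ℕ → ℕ} (hf : Monotone f)
    (hE : ∀ i (hts : i < ts.length) (hvs : i + 1 < vs.length),
      H.E s(vs[i], vs[i + 1]) (f ts[i])) :
    H.IsTempPath s z vs (ts.map f) := by
  obtain ⟨hlen, hnd, hh, hl, hc, -⟩ := h
  refine ⟨by simpa using hlen, hnd, hh, hl, ?_, fun i hts hvs => ?_⟩
  · rw [List.Chain', List.isChain_map]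
    exact hc.imp fun _ _ hab => hf hab
  · simp only [List.length_map] at hts
    simpa using hE i hts hvs

theorem IsTempPath.edge (h : G.IsTempPath s z vs ts) {i : ℕ} (hts : i < ts.length) :
    G.E s(vs[i]'(by have := h.1; omega), vs[i + 1]'(by have := h.1; omega)) ts[i] :=
  h.2.2.2.2.2 i hts (by have := h.1; omega)

theorem IsTempPath.of_del {S : Set V} (h : (G.del S).IsTempPath s z vs ts) :
    G.IsTempPath s z vs ts := by
  simpa using h.map monotone_id fun _ hts _ => (h.edge hts).1

theorem IsTempPath.getElem_zero (h : G.IsTempPath s z vs ts) :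
    vs[0]'(by have := h.1; omega) = s := by
  have hh := h.2.2.1
  rwa [List.head?_eq_getElem?, List.getElem?_eq_getElem, Option.some_inj] at hh

theorem IsTempPath.getElem_length (h : G.IsTempPath s z vs ts) :
    vs[ts.length]'(by have := h.1; omega) = z := by
  have hl := h.2.2.2.1
  have hlen := h.1
  rw [List.getLast?_eq_getElem?, List.getElem?_eq_getElem (by omega), Option.some_inj] at hl
  simpa only [hlen, Nat.add_sub_cancel] using hl

theorem IsTempPath.length_pos (h : G.IsTempPath s z vs ts) (hsz : s ≠ z) :
    0 < ts.length := by
  obtain ⟨hlen, -, hh, hl, -⟩ := h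
  refine Nat.pos_of_ne_zero fun h0 => hsz ?_
  obtain ⟨v, rfl⟩ := List.length_eq_one_iff.mp (hlen.trans (by rw [h0]))
  simp_all

theorem IsTempPath.getElem_mono (h : G.IsTempPath s z vs ts) {i j : ℕ}
    (hj : j < ts.length) (hij : i ≤ j) : ts[i] ≤ ts[j] :=
  (List.isChain_iff_pairwise.mp h.2.2.2.2.1).rel_get_of_le hij

end IsTempPath

section completeLate

theorem completeLate_E_add_one {e : Sym2 V} {t : ℕ} (h : G.E e t) :
    (completeLate G s z).E e (t + 1) :=
  Or.inl ⟨t, h, rfl⟩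

theorem completeLate_E_sub_one {e : Sym2 V} {t : ℕ} (h : (completeLate G s z).E e t)
    (h2 : 2 ≤ t) (hτ : t ≤ G.tau + 1) : G.E e (t - 1) := by
  rcases h with ⟨t₀, h, rfl⟩ | ⟨rfl, -⟩ | ⟨rfl, -⟩
  · simpa using h
  · omega
  · omega

theorem two_le_of_completeLate_E_of_mem {e : Sym2 V} {t : ℕ}
    (h : (completeLate G s z).E e t) (hs : s ∈ e) : 2 ≤ t := by
  rcases h with ⟨t₀, h, rfl⟩ | ⟨-, -, hs', -⟩ | ⟨rfl, -⟩
  · have := G.valid e t₀ h; omega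
  · exact absurd hs hs'
  · omega

theorem notMem_of_completeLate_E_tau_add_two (hsz : s ≠ z) {e : Sym2 V}
    (h : (completeLate G s z).E e (G.tau + 2)) : z ∉ e := by
  rcases h with ⟨t₀, h, ht⟩ | ⟨h1, -⟩ | ⟨-, ⟨v, hvz, -, rfl⟩, -⟩
  · have := G.valid e t₀ h; omega
  · omega
  · simp [hsz.symm, hvz.symm]

theorem IsTempPath.getElem_mem_Icc_of_completeLate
    (h : (completeLate G s z).IsTempPath s z vs ts) (hsz : s ≠ z) {i : ℕ} (hi : i < ts.length) :
    ts[i] ∈ Set.Icc 2 (G.tau + 1) := by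
  have hlen := h.1
  have hpos := h.length_pos hsz
  have hl : ts.length - 1 < ts.length := by omega
  have hfirst : 2 ≤ ts[0] := by
    refine two_le_of_completeLate_E_of_mem (h.edge hpos) ?_
    rw [h.getElem_zero]
    exact Sym2.mem_mk_left _ _
  have hlast : ts[ts.length - 1] ≤ G.tau + 1 := by
    have hτ := ((completeLate G s z).valid _ _ (h.edge hl)).2
    refine Nat.le_of_lt_succ (lt_of_le_of_ne hτ fun heq =>
      notMem_of_completeLate_E_tau_add_two hsz (heq ▸ h.edge hl) ?_)
    simp only [show ts.length - 1 + 1 = ts.length by omega, h.getElem_length]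
    exact Sym2.mem_mk_right _ _
  exact ⟨hfirst.trans (h.getElem_mono hi (Nat.zero_le _)),
    (h.getElem_mono hl (by omega)).trans hlast⟩

theorem IsTempPath.completeLate_del {S : Set V} (h : (G.del S).IsTempPath s z vs ts) :
    ((completeLate G s z).del S).IsTempPath s z vs (ts.map (· + 1)) :=
  h.map (fun _ _ hab => Nat.add_le_add_right hab 1) fun _ hts _ =>
    let ⟨hE, hS⟩ := h.edge hts
    ⟨completeLate_E_add_one hE, hS⟩

theorem IsTempPath.of_completeLate_del (hsz : s ≠ z) {S : Set V}
    (h : ((completeLate G s z).del S).IsTempPath s z vs ts) :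
    (G.del S).IsTempPath s z vs (ts.map (· - 1)) :=
  h.map (fun _ _ hab => Nat.sub_le_sub_right hab 1) fun _ hts _ =>
    let ⟨hE, hS⟩ := h.edge hts
    let ⟨h2, hτ⟩ := h.of_del.getElem_mem_Icc_of_completeLate hsz hts
    ⟨completeLate_E_sub_one hE h2 hτ, hS⟩

theorem isSep_completeLate_iff (hsz : s ≠ z) {S : Set V} :
    (completeLate G s z).IsSep s z S ↔ G.IsSep s z S :=
  not_congr ⟨fun ⟨vs, _, h⟩ => ⟨vs, _, h.of_completeLate_del hsz⟩,
    fun ⟨vs, _, h⟩ => ⟨vs, _, h.completeLate_del⟩⟩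

theorem completeLate_underlying_adj (hnoedge : ∀ t, ¬ G.E s(s, z) t) {v w : V} :
    (completeLate G s z).underlying.Adj v w ↔ v ≠ w ∧ s(v, w) ≠ s(s, z) := by
  constructor
  · rintro ⟨hvw, t, hE⟩
    refine ⟨hvw, fun he => ?_⟩
    rw [he] at hE
    rcases hE with ⟨t₀, hG, -⟩ | ⟨-, -, hs, -⟩ | ⟨-, ⟨u, huz, hus, hsu⟩, -⟩
    · exact hnoedge t₀ hG
    · exact hs (Sym2.mem_mk_left s z)
    · rcases Sym2.eq_iff.mp hsu with ⟨-, hzu⟩ | ⟨hsu, -⟩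
      · exact huz hzu.symm
      · exact hus hsu.symm
  · rintro ⟨hvw, hne⟩
    refine ⟨hvw, ?_⟩
    by_cases hG : ∃ t, G.E s(v, w) t
    · obtain ⟨t, ht⟩ := hG
      exact ⟨t + 1, completeLate_E_add_one ht⟩
    push Not at hG
    by_cases hs : s ∈ s(v, w)
    · obtain ⟨u, hu⟩ := Sym2.mem_iff_exists.mp hs
      refine ⟨G.tau + 2, Or.inr (Or.inr ⟨rfl, ⟨u, ?_, ?_, hu⟩, hG⟩)⟩
      · rintro rfl
        exact hne hu
      · rintro rfl
        rcases Sym2.eq_iff.mp hu with ⟨rfl, rfl⟩ | ⟨rfl, rfl⟩ <;> exact hvw rfl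
    · exact ⟨1, Or.inr (Or.inl ⟨rfl, by simpa using hvw, hs, hG⟩)⟩

end completeLate

end TemporalGraph

open TemporalGraph in
theorem completeLate_sep_iff_general {V : Type*} (G : TemporalGraph V) (s z : V)
    (hsz : s ≠ z) (hnoedge : ∀ t, ¬ G.E s(s, z) t)
    (S : Set V) :
    (G.IsSep s z S ↔ (completeLate G s z).IsSep s z S) ∧
    (∀ v w : V, (completeLate G s z).underlying.Adj v w ↔
      (v ≠ w ∧ s(v, w) ≠ s(s, z))) :=
  ⟨(isSep_completeLate_iff hsz).symm, fun _ _ => completeLate_underlying_adj hnoedge⟩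

open TemporalGraph in
/-- completing the graph late preserves temporal
`(s,z)`-separators, and the underlying graph of the result is the complete
graph minus the single edge `{s,z}`. -/
theorem completeLate_sep_iff {V : Type*} (G : TemporalGraph V) (s z : V)
    (hsz : s ≠ z) (hnoedge : ∀ t, ¬ G.E s(s, z) t)
    (S : Set V) (hs : s ∉ S) (hz : z ∉ S) :
    (G.IsSep s z S ↔ (completeLate G s z).IsSep s z S) ∧
    (∀ v w : V, (completeLate G s z).underlying.Adj v w ↔
      (v ≠ w ∧ s(v, w) ≠ s(s, z))) :=
  completeLate_sep_iff_general G s z hsz hnoedge S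
end

section
/- Valid colorings characterize temporal separators: let G = (V, E, τ) be a temporal graph with distinct s, z ∈ V. Call a partition V = A₁ ⊎ ... ⊎ A_τ ⊎ S ⊎ Z a valid coloring if (i) s ∈ A₁, (ii) z ∈ Z, and (iii) for all i, j ∈ [τ], all a ∈ A_i, a' ∈ A_j, b ∈ Z: there is no temporal (a,b)-path in G − S with departure time at least i, and there is no temporal (a,a')-path in G − S with departure time at least i and arrival time at most j−1. Then there exists a valid coloring with |S| = k if and only if there exists a temporal (s,z)-separator of size k in G. -/
namespace TemporalGraph

/-- A valid coloring of `V` for the temporal graph `G` and terminals `s, z`,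
encoded by `col : V → ℕ`: `col v = 0` means `v ∈ S`, `col v = i ∈ [1, τ]`
means `v ∈ Aᵢ`, and `col v = τ + 1` means `v ∈ Z`. Conditions: `s ∈ A₁`,
`z ∈ Z`, and in `G − S` there is no temporal path from a vertex of `Aᵢ` to a
vertex of `Z` with departure time at least `i`, and no temporal path from a
vertex of `Aᵢ` to a vertex of `Aⱼ` with departure time at least `i` and
arrival time at most `j − 1`. -/
def ValidColoring {V : Type*} (G : TemporalGraph V) (s z : V) (col : V → ℕ) : Prop :=
  (∀ v, col v ≤ G.tau + 1) ∧
  col s = 1 ∧ col z = G.tau + 1 ∧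
  (∀ a b vs ts, 1 ≤ col a → col a ≤ G.tau → col b = G.tau + 1 →
      (G.del {v | col v = 0}).IsTempPath a b vs ts → ts ≠ [] →
      ¬ ∀ t' ∈ ts, col a ≤ t') ∧
  (∀ a a' vs ts, 1 ≤ col a → col a ≤ G.tau → 1 ≤ col a' → col a' ≤ G.tau →
      (G.del {v | col v = 0}).IsTempPath a a' vs ts → ts ≠ [] →
      ¬ ((∀ t' ∈ ts, col a ≤ t') ∧ ∀ t' ∈ ts, t' + 1 ≤ col a'))

end TemporalGraph

namespace TemporalGraph

variable {V : Type*} {G : TemporalGraph V}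

lemma isTempPath_singleton (s : V) : G.IsTempPath s s [s] [] := by
  refine ⟨rfl, by simp, rfl, by simp, List.IsChain.nil, ?_⟩
  intro i hts _
  simp at hts

lemma eq_of_isTempPath_nil {s w : V} {vs : List V} (h : G.IsTempPath s w vs []) : s = w := by
  obtain ⟨hlen, -, hhd, hlast, -, -⟩ := h
  obtain ⟨a, rfl⟩ := List.length_eq_one_iff.1 (by simpa using hlen)
  simp at hhd hlast
  rw [← hhd, ← hlast]

lemma isTempPath_tail {s w a b : V} {rest : List V} {t : ℕ} {ts : List ℕ}
    (h : G.IsTempPath s w (a :: b :: rest) (t :: ts)) :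
    G.IsTempPath b w (b :: rest) ts := by
  obtain ⟨hlen, hnd, hhd, hlast, hch, hedge⟩ := h
  refine ⟨by simpa using hlen, hnd.of_cons, rfl,
    by simpa [List.getLast?_cons_cons] using hlast, hch.tail, ?_⟩
  intro i hts hvs
  have := hedge (i + 1) (by simpa using hts) (by simpa using hvs)
  simpa using this

lemma isTempPath_cons {w u b : V} {rest : List V} {t : ℕ} {ts : List ℕ}
    (he : G.E s(u, b) t) (h : G.IsTempPath b w (b :: rest) ts)
    (hu : u ∉ b :: rest) (hle : ∀ t' ∈ ts, t ≤ t') :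
    G.IsTempPath u w (u :: b :: rest) (t :: ts) := by
  obtain ⟨hlen, hnd, hhd, hlast, hch, hedge⟩ := h
  refine ⟨by simpa using hlen, List.nodup_cons.2 ⟨hu, hnd⟩, rfl,
    by simpa [List.getLast?_cons_cons] using hlast, ?_, ?_⟩
  · unfold List.Chain' at hch ⊢
    rw [List.isChain_iff_pairwise] at hch ⊢
    exact List.pairwise_cons.2 ⟨hle, hch⟩
  · intro i hts hvs
    match i with
    | 0 => simpa using he
    | (j + 1) =>
      have := hedge j (by simpa using hts) (by simpa using hvs)
      simpa using this

lemma IsTempPath.label_bound {s w : V} {vs : List V} {ts : List ℕ}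
    (h : G.IsTempPath s w vs ts) : ∀ t ∈ ts, 1 ≤ t ∧ t ≤ G.tau := by
  intro t ht
  obtain ⟨i, rfl⟩ := List.mem_iff_get.1 ht
  obtain ⟨hlen, -, -, -, -, hedge⟩ := h
  exact G.valid _ _ (hedge i i.2 (by omega))

/-- A temporal walk: vertices may repeat. -/
inductive TWalk (G : TemporalGraph V) : V → V → List ℕ → Prop where
  | nil (v : V) : TWalk G v v []
  | cons {u v w : V} {t : ℕ} {ts : List ℕ} :
      G.E s(u, v) t → TWalk G v w ts → (∀ t' ∈ ts, t ≤ t') → TWalk G u w (t :: ts)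

lemma IsTempPath.twalk : ∀ {vs : List V} {s w : V} {ts : List ℕ},
    G.IsTempPath s w vs ts → G.TWalk s w ts := by
  intro vs
  induction vs with
  | nil => intro s w ts h; exact absurd h.2.2.1 (by simp)
  | cons a l ih =>
    intro s w ts h
    match l, ts with
    | [], [] =>
      have hs : a = s := by simpa using h.2.2.1
      have hw : a = w := by simpa using h.2.2.2.1
      subst hs; rw [← hw]; exact TWalk.nil a
    | [], t :: ts' => exact absurd h.1 (by simp)
    | b :: rest, [] => exact absurd h.1 (by simp)
    | b :: rest, t :: ts' =>
      have hs : a = s := by simpa using h.2.2.1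
      have htail := isTempPath_tail h
      have hedge := h.2.2.2.2.2 0 (by simp) (by simp)
      simp only [List.get] at hedge
      have hch := h.2.2.2.2.1
      unfold List.Chain' at hch
      rw [List.isChain_iff_pairwise] at hch
      have hle : ∀ t' ∈ ts', t ≤ t' := (List.pairwise_cons.1 hch).1
      subst hs
      exact TWalk.cons hedge (ih htail) hle

lemma TWalk.trans {s a b : V} {ts₁ ts₂ : List ℕ} {m : ℕ}
    (h1 : G.TWalk s a ts₁) (h2 : G.TWalk a b ts₂)
    (hm1 : ∀ t ∈ ts₁, t ≤ m) (hm2 : ∀ t ∈ ts₂, m ≤ t) :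
    G.TWalk s b (ts₁ ++ ts₂) := by
  induction h1 with
  | nil v => simpa using h2
  | @cons u v w t ts he _ hle ih =>
    refine TWalk.cons he (ih h2 fun t' ht' => hm1 t' (by simp [ht'])) ?_
    intro t' ht'
    rcases List.mem_append.1 ht' with h | h
    · exact hle t' h
    · exact le_trans (hm1 t (by simp)) (hm2 t' h)

lemma IsTempPath.suffix : ∀ {vs : List V} {v w : V} {ts : List ℕ},
    G.IsTempPath v w vs ts → ∀ u ∈ vs,
    ∃ vs' ts', G.IsTempPath u w vs' ts' ∧ ∀ x ∈ ts', x ∈ ts := by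
  intro vs
  induction vs with
  | nil => intro v w ts _ u hu; simp at hu
  | cons a l ih =>
    intro v w ts h u hu
    rcases List.mem_cons.1 hu with rfl | hu
    · have hs : u = v := by simpa using h.2.2.1
      subst hs
      exact ⟨u :: l, ts, h, fun x hx => hx⟩
    · match l, ts with
      | [], _ => simp at hu
      | b :: rest, [] => exact absurd h.1 (by simp)
      | b :: rest, t :: ts' =>
        obtain ⟨vs', ts'', hp, hsub⟩ := ih (isTempPath_tail h) u hu
        exact ⟨vs', ts'', hp, fun x hx => by simp [hsub x hx]⟩

lemma TWalk.exists_path {s w : V} {ts : List ℕ} (h : G.TWalk s w ts) :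
    ∃ vs ts', G.IsTempPath s w vs ts' ∧ ∀ t ∈ ts', t ∈ ts := by
  induction h with
  | nil v => exact ⟨[v], [], isTempPath_singleton v, by simp⟩
  | @cons u v w t ts he _ hle ih =>
    obtain ⟨vs', ts'', hp, hsub⟩ := ih
    by_cases hu : u ∈ vs'
    · obtain ⟨vs2, ts2, hp2, hsub2⟩ := hp.suffix u hu
      exact ⟨vs2, ts2, hp2, fun x hx => by simp [hsub x (hsub2 x hx)]⟩
    · match vs', ts'', hp with
      | a :: rest, ts'', hp =>
        have ha : a = v := by simpa using hp.2.2.1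
        subst ha
        refine ⟨u :: a :: rest, t :: ts'', ?_, ?_⟩
        · exact isTempPath_cons he hp hu fun t' ht' => hle t' (hsub t' ht')
        · intro x hx
          rcases List.mem_cons.1 hx with rfl | hx
          · simp
          · simp [hsub x hx]

lemma reachBy_mono {s w : V} {t t' : ℕ} (h : G.ReachBy s w t) (htt : t ≤ t') :
    G.ReachBy s w t' := by
  obtain ⟨vs, ts, hp, hb⟩ := h
  exact ⟨vs, ts, hp, fun x hx => le_trans (hb x hx) htt⟩

lemma Reach.reachBy_tau {s w : V} (h : G.Reach s w) : G.ReachBy s w G.tau := by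
  obtain ⟨vs, ts, hp⟩ := h
  exact ⟨vs, ts, hp, fun x hx => (hp.label_bound x hx).2⟩

end TemporalGraph

open TemporalGraph in
/-- there exists a valid coloring whose `S`-class has size `k`
iff there exists a temporal `(s,z)`-separator of size `k`. -/
theorem valid_coloring_iff_sep {V : Type*} [Fintype V] (G : TemporalGraph V)
    (s z : V) (hsz : s ≠ z) (htau : 1 ≤ G.tau) (k : ℕ) :
    (∃ col : V → ℕ, ValidColoring G s z col ∧ {v | col v = 0}.ncard = k) ↔
    (∃ S : Set V, s ∉ S ∧ z ∉ S ∧ G.IsSep s z S ∧ S.ncard = k) := by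
  constructor
  · rintro ⟨col, ⟨hbd, hcs, hcz, hAZ, hAA⟩, hk⟩
    refine ⟨{v | col v = 0}, ?_, ?_, ?_, hk⟩
    · simp only [Set.mem_setOf_eq, hcs]; omega
    · simp only [Set.mem_setOf_eq, hcz]; omega
    · rintro ⟨vs, ts, hp⟩
      match ts with
      | [] => exact hsz (eq_of_isTempPath_nil hp)
      | t :: ts' =>
        refine hAZ s z vs (t :: ts') (by omega) (by omega) hcz hp (by simp) ?_
        intro t' ht'
        have := (hp.label_bound t' ht').1
        omega
  · rintro ⟨S, hsS, hzS, hsep, hk⟩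
    classical
    set H := G.del S with hH
    set f : V → ℕ := fun v => sInf {t | H.ReachBy s v t} with hf
    set col : V → ℕ :=
      fun v => if v ∈ S then 0 else if H.Reach s v then max 1 (f v) else G.tau + 1 with hcol
    have hReachS : H.Reach s s := ⟨[s], [], isTempPath_singleton s⟩
    have hfs : f s = 0 := by
      have : H.ReachBy s s 0 := ⟨[s], [], isTempPath_singleton s, by simp⟩
      exact Nat.sInf_eq_zero.2 (Or.inl this)
    have hcols : col s = 1 := by simp [hcol, hsS, hReachS, hfs]
    have hftau : ∀ v, H.Reach s v → f v ≤ G.tau := by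
      intro v hv
      exact Nat.sInf_le hv.reachBy_tau
    have hreach_col : ∀ v, v ∉ S → H.Reach s v →
        H.ReachBy s v (col v) ∧ 1 ≤ col v ∧ col v ≤ G.tau := by
      intro v hvS hv
      have hne : {t | H.ReachBy s v t}.Nonempty := ⟨G.tau, hv.reachBy_tau⟩
      have hmem : H.ReachBy s v (f v) := Nat.sInf_mem hne
      have hcv : col v = max 1 (f v) := by simp [hcol, hvS, hv]
      have hfv : f v ≤ G.tau := hftau v hv
      refine ⟨?_, by omega, by omega⟩
      rw [hcv]
      exact reachBy_mono hmem (by omega)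
    have hdecode : ∀ a, 1 ≤ col a → col a ≤ G.tau → a ∉ S ∧ H.Reach s a := by
      intro a h1 h2
      by_cases haS : a ∈ S
      · simp [hcol, haS] at h1
      by_cases hra : H.Reach s a
      · exact ⟨haS, hra⟩
      · simp [hcol, haS, hra] at h2
    have hnz : ¬ H.Reach s z := fun h => hsep h
    have hcolz : col z = G.tau + 1 := by simp [hcol, hzS, hnz]
    have hset : {v | col v = 0} = S := by
      ext v
      simp only [Set.mem_setOf_eq]
      constructor
      · intro h
        by_contra hvS
        by_cases hv : H.Reach s v
        · simp [hcol, hvS, hv] at h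
        · simp [hcol, hvS, hv] at h
      · intro h; simp [hcol, h]
    refine ⟨col, ⟨?_, hcols, hcolz, ?_, ?_⟩, by rw [hset]; exact hk⟩
    · intro v
      by_cases hvS : v ∈ S
      · simp [hcol, hvS]
      by_cases hv : H.Reach s v
      · have := hftau v hv
        simp only [hcol, hvS, hv, if_false, if_true]
        omega
      · simp [hcol, hvS, hv]
    · -- no path from A_i to Z with departure ≥ i
      intro a b vs ts h1 h2 hb hp hne hall
      rw [hset] at hp
      obtain ⟨haS, hra⟩ := hdecode a h1 h2
      have hnb : ¬ H.Reach s b := by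
        intro hrb
        by_cases hbS : b ∈ S
        · simp [hcol, hbS] at hb
        · have := (hreach_col b hbS hrb).2.2
          omega
      obtain ⟨hRa, -, -⟩ := hreach_col a haS hra
      obtain ⟨vs₁, ts₁, hp1, hb1⟩ := hRa
      have hw : H.TWalk s b (ts₁ ++ ts) := hp1.twalk.trans hp.twalk hb1 hall
      obtain ⟨vs', ts', hp', -⟩ := hw.exists_path
      exact hnb ⟨vs', ts', hp'⟩
    · -- no path from A_i to A_j with departure ≥ i and arrival ≤ j − 1
      intro a a' vs ts h1 h2 h1' h2' hp hne hcond
      obtain ⟨hall, hupper⟩ := hcond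
      rw [hset] at hp
      obtain ⟨haS, hra⟩ := hdecode a h1 h2
      obtain ⟨haS', hra'⟩ := hdecode a' h1' h2'
      obtain ⟨t0, ts0, rfl⟩ := List.exists_cons_of_ne_nil hne
      have ht0 : 1 ≤ t0 := (hp.label_bound t0 (by simp)).1
      have ht0u : t0 + 1 ≤ col a' := hupper t0 (by simp)
      have ht0l : col a ≤ t0 := hall t0 (by simp)
      -- so col a' ≥ 2, hence col a' = f a'
      have hca' : col a' = max 1 (f a') := by simp [hcol, haS', hra']
      have hfa2 : f a' = col a' := by omega
      obtain ⟨hRa, -, -⟩ := hreach_col a haS hra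
      obtain ⟨vs₁, ts₁, hp1, hb1⟩ := hRa
      have hw : H.TWalk s a' (ts₁ ++ (t0 :: ts0)) := hp1.twalk.trans hp.twalk hb1 hall
      obtain ⟨vs', ts', hp', hsub⟩ := hw.exists_path
      have hRB : H.ReachBy s a' (col a' - 1) := by
        refine ⟨vs', ts', hp', ?_⟩
        intro x hx
        rcases List.mem_append.1 (hsub x hx) with h | h
        · have := hb1 x h; omega
        · have := hupper x h; omega
      have hle : f a' ≤ col a' - 1 := Nat.sInf_le hRB
      omega
end
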